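/- arXiv:math/0509478 — 2 statements merged into one kernel-verified Lean document; each statement's English description precedes it below -/
import Mathlib

section
/- A set S of internal edges of a maximal outerplanar graph G is simultaneously flippable if and only if the corresponding set of dual edges forms a matching in the dual tree of G. -/
/-- Two chords of a convex polygon cross. -/
def Crosses {n : ℕ} (e f : Sym2 (Fin n)) : Prop :=
  ∃ a b c d : Fin n, e = s(a, b) ∧ f = s(c, d) ∧ a < c ∧ c < b ∧ b < d

/-- A maximal outerplanar graph on `n` vertices, modelled as a triangulation of
a convex polygon with vertices `0, 1, …, n-1` in cyclic order: a maximal set of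
pairwise noncrossing diagonals (internal edges). -/
structure PolyTri (n : ℕ) where
  diag : Set (Sym2 (Fin n))
  chord : ∀ e ∈ diag, ∃ a b : Fin n, e = s(a, b) ∧ a ≠ b ∧
    b.val ≠ (a.val + 1) % n ∧ a.val ≠ (b.val + 1) % n
  noncross : ∀ e ∈ diag, ∀ f ∈ diag, ¬ Crosses e f
  card_diag : diag.ncard = n - 3

namespace PolyTri

variable {n : ℕ} (T : PolyTri n)

/-- Adjacency: consecutive on the outer cycle, or joined by a diagonal. -/
def Adj (a b : Fin n) : Prop :=
  a ≠ b ∧ (b.val = (a.val + 1) % n ∨ a.val = (b.val + 1) % n ∨ s(a, b) ∈ T.diag)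

/-- In a triangulated polygon the (internal) faces are exactly the triangles. -/
def IsFace (f : Set (Fin n)) : Prop :=
  f.ncard = 3 ∧ ∀ a ∈ f, ∀ b ∈ f, a ≠ b → T.Adj a b

/-- Vertex `x` sees the edge `ab`: `x` is the third vertex of an internal face
containing `a` and `b`. -/
def Sees (x a b : Fin n) : Prop :=
  x ≠ a ∧ x ≠ b ∧ T.IsFace {x, a, b}

/-- An internal edge is individually flippable: the two vertices seeing it are
distinct and non-adjacent. -/
def IndivFlippable (e : Sym2 (Fin n)) : Prop :=
  ∃ a b x y : Fin n, e = s(a, b) ∧ x ≠ y ∧ T.Sees x a b ∧ T.Sees y a b ∧ ¬ T.Adj x y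

/-- `e'` is the result of flipping the internal edge `e`. -/
def FlipRel (e e' : Sym2 (Fin n)) : Prop :=
  ∃ a b x y : Fin n, e = s(a, b) ∧ e' = s(x, y) ∧ x ≠ y ∧ T.Sees x a b ∧ T.Sees y a b

/-- Simultaneously flipping the set `S` of internal edges of `T` yields `T'`. -/
def FlipTo (S : Set (Sym2 (Fin n))) (T' : PolyTri n) : Prop :=
  S ⊆ T.diag ∧ T'.diag = (T.diag \ S) ∪ {e' | ∃ e ∈ S, T.FlipRel e e'}

/-- `S` is simultaneously flippable in `T`. -/
def SimFlippable (S : Set (Sym2 (Fin n))) : Prop :=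
  ∃ T' : PolyTri n, T.FlipTo S T'

end PolyTri


namespace Aux
open PolyTri
variable {n : ℕ}

lemma sorted_rep_unique {p q p' q' : Fin n} (h : s(p,q) = s(p',q')) (h1 : p.1 < q.1)
    (h2 : p'.1 < q'.1) : p = p' ∧ q = q' := by
  rcases Sym2.eq_iff.1 h with ⟨rfl, rfl⟩ | ⟨rfl, rfl⟩
  · exact ⟨rfl, rfl⟩
  · exact absurd h2 (by omega)

lemma crosses_iff {a b c d : Fin n} (hab : a.1 < b.1) (hcd : c.1 < d.1) :
    Crosses s(a,b) s(c,d) ↔ (a.1 < c.1 ∧ c.1 < b.1 ∧ b.1 < d.1) := by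
  constructor
  · rintro ⟨a', b', c', d', he, hf, h1, h2, h3⟩
    rw [Fin.lt_def] at h1 h2 h3
    rcases Sym2.eq_iff.1 he with ⟨rfl, rfl⟩|⟨rfl,rfl⟩ <;>
      rcases Sym2.eq_iff.1 hf with ⟨rfl,rfl⟩|⟨rfl,rfl⟩ <;> omega
  · rintro ⟨h1, h2, h3⟩
    exact ⟨a, b, c, d, rfl, rfl, Fin.lt_def.2 h1, Fin.lt_def.2 h2, Fin.lt_def.2 h3⟩

/-- `a` and `b` are joined by a diagonal or a hull edge. -/
def Edg (T : PolyTri n) (a b : Fin n) : Prop :=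
  s(a,b) ∈ T.diag ∨ b.1 = (a.1+1) % n ∨ a.1 = (b.1+1) % n

lemma edg_symm {T : PolyTri n} {a b : Fin n} (h : Edg T a b) : Edg T b a := by
  rcases h with h|h|h
  · exact Or.inl (by rwa [Sym2.eq_swap])
  · exact Or.inr (Or.inr h)
  · exact Or.inr (Or.inl h)

lemma adj_of_edg {T : PolyTri n} {a b : Fin n} (h : Edg T a b) (hne : a ≠ b) : T.Adj a b := by
  rcases h with h|h|h
  · exact ⟨hne, Or.inr (Or.inr h)⟩
  · exact ⟨hne, Or.inl h⟩
  · exact ⟨hne, Or.inr (Or.inl h)⟩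

lemma edg_of_adj {T : PolyTri n} {a b : Fin n} (h : T.Adj a b) : Edg T a b := by
  rcases h.2 with h'|h'|h'
  · exact Or.inr (Or.inl h')
  · exact Or.inr (Or.inr h')
  · exact Or.inl h'

/-- Workhorse: no diagonal crosses an `Edg` (hull edges can't be crossed, diagonals
are noncrossing). Stated in terms of value patterns. -/
lemma not_crossed {T : PolyTri n} {p q u v : Fin n} (hpq : Edg T p q) (h1 : p.1 < q.1)
    (hd : s(u,v) ∈ T.diag) (h2 : u.1 < v.1) :
    ¬(p.1 < u.1 ∧ u.1 < q.1 ∧ q.1 < v.1) ∧ ¬(u.1 < p.1 ∧ p.1 < v.1 ∧ v.1 < q.1) := by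
  have hq : q.1 < n := q.2
  have hv : v.1 < n := v.2
  rcases hpq with h|h|h
  · exact ⟨fun hc => T.noncross _ h _ hd ((crosses_iff h1 h2).2 hc),
      fun hc => T.noncross _ hd _ h ((crosses_iff h2 h1).2 hc)⟩
  · rw [Nat.mod_eq_of_lt (by omega)] at h; omega
  · rcases Nat.lt_or_ge (q.1+1) n with hlt|hge
    · rw [Nat.mod_eq_of_lt hlt] at h; omega
    · have h4 : (q.1+1) % n = 0 := by
        have : q.1+1 = n := by omega
        simp [this]
      rw [h4] at h; omega

lemma edg_diag {T : PolyTri n} {p q : Fin n} (h : Edg T p q) (h2 : p.1+2 ≤ q.1)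
    (h3 : ¬(p.1 = 0 ∧ q.1 = n-1)) : s(p,q) ∈ T.diag := by
  have hq := q.2
  rcases h with h|h|h
  · exact h
  · rw [Nat.mod_eq_of_lt (by omega)] at h; omega
  · rcases Nat.lt_or_ge (q.1+1) n with hlt|hge
    · rw [Nat.mod_eq_of_lt hlt] at h; omega
    · have h4 : (q.1+1) % n = 0 := by
        have : q.1+1 = n := by omega
        simp [this]
      rw [h4] at h; omega

lemma rep_of_diag {T : PolyTri n} {e : Sym2 (Fin n)} (he : e ∈ T.diag) :
    ∃ a b : Fin n, e = s(a,b) ∧ a.1 + 2 ≤ b.1 ∧ ¬(a.1 = 0 ∧ b.1 = n - 1) := by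
  obtain ⟨a, b, rfl, hne, hb, ha⟩ := T.chord _ he
  have hbn := b.2; have han := a.2
  rcases Nat.lt_trichotomy a.1 b.1 with h|h|h
  · refine ⟨a, b, rfl, ?_, ?_⟩
    · rw [Nat.mod_eq_of_lt (by omega)] at hb; omega
    · rintro ⟨h0, h1⟩
      have h4 : (b.1+1) % n = 0 := by
        have : b.1+1 = n := by omega
        simp [this]
      rw [h4] at ha; exact ha h0
  · exact absurd (Fin.ext h) hne
  · refine ⟨b, a, Sym2.eq_swap, ?_, ?_⟩
    · rw [Nat.mod_eq_of_lt (by omega)] at ha; omega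
    · rintro ⟨h0, h1⟩
      have h4 : (a.1+1) % n = 0 := by
        have : a.1+1 = n := by omega
        simp [this]
      rw [h4] at hb; exact hb h0

lemma chord_of {p q : Fin n} (h2 : p.1+2 ≤ q.1) (h3 : ¬(p.1=0 ∧ q.1=n-1)) :
    ∃ a b : Fin n, s(p,q) = s(a,b) ∧ a ≠ b ∧ b.1 ≠ (a.1+1)%n ∧ a.1 ≠ (b.1+1)%n := by
  have hq := q.2
  refine ⟨p, q, rfl, fun h => absurd (congrArg Fin.val h) (by omega), ?_, ?_⟩
  · rw [Nat.mod_eq_of_lt (by omega)]; omega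
  · rcases Nat.lt_or_ge (q.1+1) n with hlt|hge
    · rw [Nat.mod_eq_of_lt hlt]; omega
    · have h4 : (q.1+1) % n = 0 := by
        have : q.1+1 = n := by omega
        simp [this]
      rw [h4]; omega

end Aux
namespace Aux
variable {n : ℕ}

lemma pick_point (F : Set (Sym2 (Fin n)))
    (hlam : ∀ e ∈ F, ∀ f ∈ F, ¬ Crosses e f)
    {a b : Fin n} (he : s(a,b) ∈ F) (hab : a.1 + 2 ≤ b.1) :
    ∃ p : ℕ, a.1 < p ∧ p < b.1 ∧
      ∀ f ∈ F, ∀ c d : Fin n, f = s(c,d) → c.1 < d.1 →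
        a.1 ≤ c.1 → d.1 ≤ b.1 → f ≠ s(a,b) → ¬(c.1 < p ∧ p < d.1) := by
  classical
  set Sub : Set (Fin n × Fin n) :=
    {cd | s(cd.1, cd.2) ∈ F ∧ cd.1.1 < cd.2.1 ∧ a.1 ≤ cd.1.1 ∧ cd.2.1 ≤ b.1 ∧
      s(cd.1, cd.2) ≠ s(a,b)} with hSub
  by_cases hne : Sub.Nonempty
  · obtain ⟨⟨c, d⟩, hmem, hmax⟩ :=
      Set.Finite.exists_maximalFor (fun cd : Fin n × Fin n => cd.2.1 - cd.1.1) Sub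
        (Set.toFinite _) hne
    obtain ⟨hcdF, hcd, hac, hdb, hcdne⟩ := hmem
    simp only at hcdF hcd hac hdb hcdne
    by_cases hdbeq : d.1 < b.1
    · refine ⟨d.1, by omega, hdbeq, ?_⟩
      rintro f hf c' d' rfl hc'd' hac' hd'b hfne ⟨hu, hv⟩
      have L := (fun hc => hlam _ hcdF _ hf hc)
      rw [crosses_iff hcd hc'd'] at L
      have hc'c : c'.1 ≤ c.1 := by
        by_contra h
        exact L ⟨by omega, hu, hv⟩
      have hmem' : (⟨c', d'⟩ : Fin n × Fin n) ∈ Sub := ⟨hf, hc'd', hac', hd'b, hfne⟩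
      have h9 : d.1 - c.1 = d'.1 - c'.1 :=
        le_antisymm (show d.1 - c.1 ≤ d'.1 - c'.1 by omega)
          (hmax hmem' (show d.1 - c.1 ≤ d'.1 - c'.1 by omega))
      omega
    · have hdb' : d.1 = b.1 := by omega
      have hca : a.1 < c.1 := by
        rcases Nat.lt_or_ge a.1 c.1 with h|h
        · exact h
        · refine absurd ?_ hcdne
          rw [show c = a from Fin.ext (by omega), show d = b from Fin.ext hdb']
      refine ⟨c.1, hca, by omega, ?_⟩
      rintro f hf c' d' rfl hc'd' hac' hd'b hfne ⟨hu, hv⟩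
      have L := (fun hc => hlam _ hf _ hcdF hc)
      rw [crosses_iff hc'd' hcd] at L
      have hd'b' : d'.1 = d.1 := by
        by_contra h
        exact L ⟨hu, hv, by omega⟩
      have hd'D : d' = d := Fin.ext hd'b'
      rw [hd'D] at hc'd' hd'b hfne hf
      have hmem' : (⟨c', d⟩ : Fin n × Fin n) ∈ Sub := ⟨hf, hc'd', hac', hd'b, hfne⟩
      have h9 : d.1 - c.1 = d.1 - c'.1 :=
        le_antisymm (show d.1 - c.1 ≤ d.1 - c'.1 by omega)
          (hmax hmem' (show d.1 - c.1 ≤ d.1 - c'.1 by omega))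
      omega
  · refine ⟨a.1 + 1, by omega, by omega, ?_⟩
    rintro f hf c d rfl hcd hac hdb hfne ⟨hu, hv⟩
    exact hne ⟨⟨c, d⟩, hf, hcd, hac, hdb, hfne⟩

lemma bound_aux (F : Set (Sym2 (Fin n)))
    (hrep : ∀ e ∈ F, ∃ a b : Fin n, e = s(a,b) ∧ a.1 + 2 ≤ b.1)
    (hlam : ∀ e ∈ F, ∀ f ∈ F, ¬ Crosses e f) : F.ncard ≤ n - 2 := by
  classical
  have key : ∀ e ∈ F, ∃ p : ℕ, 1 ≤ p ∧ p ≤ n - 2 ∧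
      ∃ a b : Fin n, e = s(a,b) ∧ a.1 < p ∧ p < b.1 ∧
        ∀ f ∈ F, ∀ c d : Fin n, f = s(c,d) → c.1 < d.1 →
          a.1 ≤ c.1 → d.1 ≤ b.1 → f ≠ e → ¬(c.1 < p ∧ p < d.1) := by
    intro e he
    obtain ⟨a, b, rfl, hab⟩ := hrep e he
    obtain ⟨p, h1, h2, h3⟩ := pick_point F hlam he hab
    have hbn : b.1 < n := b.2
    exact ⟨p, by omega, by omega, a, b, rfl, h1, h2, h3⟩
  set g : Sym2 (Fin n) → ℕ := fun e => if h : e ∈ F then (key e h).choose else 0 with hg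
  have hinj : Set.InjOn g F := by
    intro e1 h1 e2 h2 hgeq
    by_contra hne
    rw [hg] at hgeq
    simp only [dif_pos h1, dif_pos h2] at hgeq
    obtain ⟨_, _, a, b, he1, hap, hpb, hcl1⟩ := (key e1 h1).choose_spec
    obtain ⟨_, _, c, d, he2, hcp, hpd, hcl2⟩ := (key e2 h2).choose_spec
    rw [hgeq] at hap hpb hcl1
    set p := (key e2 h2).choose
    have hab : a.1 < b.1 := by omega
    have hcd : c.1 < d.1 := by omega
    have L1 := hlam e1 h1 e2 h2
    have L2 := hlam e2 h2 e1 h1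
    rw [he1, he2] at L1 L2
    rw [crosses_iff hab hcd] at L1
    rw [crosses_iff hcd hab] at L2
    rcases Nat.lt_trichotomy a.1 c.1 with h|h|h
    · have hdb : d.1 ≤ b.1 := by by_contra hx; exact L1 ⟨h, by omega, by omega⟩
      exact hcl1 e2 h2 c d he2 hcd (by omega) hdb (fun hx => hne hx.symm) ⟨hcp, hpd⟩
    · rcases Nat.lt_trichotomy b.1 d.1 with h'|h'|h'
      · exact hcl2 e1 h1 a b he1 hab (by omega) (by omega) (fun hx => hne hx) ⟨hap, hpb⟩
      · exact hne (by rw [he1, he2, show a = c from Fin.ext h, show b = d from Fin.ext h'])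
      · exact hcl1 e2 h2 c d he2 hcd (by omega) (by omega) (fun hx => hne hx.symm)
          ⟨hcp, hpd⟩
    · have hbd : b.1 ≤ d.1 := by by_contra hx; exact L2 ⟨h, by omega, by omega⟩
      exact hcl2 e1 h1 a b he1 hab (by omega) hbd (fun hx => hne hx) ⟨hap, hpb⟩
  have himg : g '' F ⊆ Set.Icc 1 (n-2) := by
    rintro m ⟨e, he, rfl⟩
    obtain ⟨hp1, hp2, -⟩ := (key e he).choose_spec
    rw [hg]; simp only [dif_pos he]
    exact ⟨hp1, hp2⟩
  calc F.ncard = (g '' F).ncard := (Set.ncard_image_of_injOn hinj).symm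
    _ ≤ (Set.Icc 1 (n-2)).ncard := Set.ncard_le_ncard himg (Set.toFinite _)
    _ ≤ n - 2 := by
        rw [← Finset.coe_Icc, Set.ncard_coe_finset, Nat.card_Icc]
        omega

lemma laminar_bound (hn : 3 ≤ n) (F : Set (Sym2 (Fin n)))
    (hrep : ∀ e ∈ F, ∃ a b : Fin n, e = s(a,b) ∧ a.1 + 2 ≤ b.1 ∧ ¬(a.1 = 0 ∧ b.1 = n-1))
    (hlam : ∀ e ∈ F, ∀ f ∈ F, ¬ Crosses e f) : F.ncard ≤ n - 3 := by
  obtain ⟨z, hz⟩ : ∃ z : Fin n, z.1 = 0 := ⟨⟨0, by omega⟩, rfl⟩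
  obtain ⟨w, hw⟩ : ∃ w : Fin n, w.1 = n-1 := ⟨⟨n-1, by omega⟩, rfl⟩
  have hzw : s(z,w) ∉ F := by
    intro hmem
    obtain ⟨a, b, hab, h2, h3⟩ := hrep _ hmem
    obtain ⟨h4, h5⟩ := sorted_rep_unique hab (by omega) (by omega)
    have h4' := congrArg Fin.val h4
    have h5' := congrArg Fin.val h5
    exact h3 ⟨by omega, by omega⟩
  have hmain : (insert s(z,w) F).ncard ≤ n - 2 := by
    apply bound_aux
    · rintro e he
      rcases Set.mem_insert_iff.1 he with rfl|he
      · exact ⟨z, w, rfl, by omega⟩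
      · obtain ⟨a, b, hab, h2, _⟩ := hrep _ he
        exact ⟨a, b, hab, h2⟩
    · rintro e he f hf
      have hzwrep : ∀ g ∈ F, ¬ Crosses s(z,w) g ∧ ¬ Crosses g s(z,w) := by
        intro g hg
        obtain ⟨c, d, rfl, h2, _⟩ := hrep _ hg
        have hd : d.1 < n := d.2
        constructor
        · rw [crosses_iff (by omega : z.1 < w.1) (by omega)]
          omega
        · rw [crosses_iff (by omega) (by omega : z.1 < w.1)]
          omega
      rcases Set.mem_insert_iff.1 he with rfl|he <;> rcases Set.mem_insert_iff.1 hf with rfl|hf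
      · rw [crosses_iff (by omega : z.1 < w.1) (by omega : z.1 < w.1)]
        omega
      · exact (hzwrep _ hf).1
      · exact (hzwrep _ he).2
      · exact hlam _ he _ hf
  rw [Set.ncard_insert_of_notMem hzw (Set.toFinite _)] at hmain
  omega

lemma diag_max {T : PolyTri n} (hn : 3 ≤ n) {a b : Fin n} (h2 : a.1+2 ≤ b.1)
    (h3 : ¬(a.1 = 0 ∧ b.1 = n-1))
    (hnc : ∀ u v : Fin n, s(u,v) ∈ T.diag → u.1 < v.1 →
      ¬(a.1<u.1 ∧ u.1<b.1 ∧ b.1<v.1) ∧ ¬(u.1<a.1 ∧ a.1<v.1 ∧ v.1<b.1)) :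
    s(a,b) ∈ T.diag := by
  by_contra hmem
  have hb : (insert s(a,b) T.diag).ncard ≤ n - 3 := by
    apply laminar_bound hn
    · rintro e he
      rcases Set.mem_insert_iff.1 he with rfl|he
      · exact ⟨a, b, rfl, h2, h3⟩
      · exact rep_of_diag he
    · rintro e he f hf
      have habs : ∀ g ∈ T.diag, ¬ Crosses s(a,b) g ∧ ¬ Crosses g s(a,b) := by
        intro g hg
        obtain ⟨c, d, rfl, hc2, _⟩ := rep_of_diag hg
        constructor
        · rw [crosses_iff (by omega) (by omega)]
          intro hx
          exact (hnc c d hg (by omega)).1 hx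
        · rw [crosses_iff (by omega) (by omega)]
          intro hx
          exact (hnc c d hg (by omega)).2 hx
      rcases Set.mem_insert_iff.1 he with rfl|he <;> rcases Set.mem_insert_iff.1 hf with rfl|hf
      · rw [crosses_iff (show a.1 < b.1 by omega) (show a.1 < b.1 by omega)]; omega
      · exact (habs _ hf).1
      · exact (habs _ he).2
      · exact T.noncross _ he _ hf
  rw [Set.ncard_insert_of_notMem hmem (Set.toFinite _), T.card_diag] at hb
  omega

end Aux
namespace Aux
variable {n : ℕ}

lemma inner_seer {T : PolyTri n} {a b : Fin n} (hE : Edg T a b) (hab : a.1 + 1 < b.1) :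
    ∃ x : Fin n, a.1 < x.1 ∧ x.1 < b.1 ∧ Edg T a x ∧ Edg T x b := by
  classical
  have hbn : b.1 < n := b.2
  have hn : 3 ≤ n := by omega
  set P : ℕ → Prop := fun m => ∃ h : m < n, a.1 < m ∧ m < b.1 ∧ Edg T a ⟨m, h⟩ with hP
  have hP1 : P (a.1+1) :=
    ⟨by omega, by omega, by omega, Or.inr (Or.inl (Nat.mod_eq_of_lt (by omega)).symm)⟩
  obtain ⟨x0, hx0n, hax0, hx0b, hEax0, hgr⟩ :
      ∃ x0, ∃ h : x0 < n, a.1 < x0 ∧ x0 < b.1 ∧ Edg T a ⟨x0, h⟩ ∧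
        ∀ k, x0 < k → k ≤ n → ¬ P k := by
    obtain ⟨h, h1, h2, h3⟩ := Nat.findGreatest_spec (show a.1+1 ≤ n by omega) hP1
    exact ⟨_, h, h1, h2, h3, fun k hk1 hk2 => Nat.findGreatest_is_greatest hk1 hk2⟩
  have hxv : (⟨x0, hx0n⟩ : Fin n).1 = x0 := rfl
  refine ⟨⟨x0, hx0n⟩, hax0, hx0b, hEax0, ?_⟩
  by_cases hhull : x0 + 1 = b.1
  · exact Or.inr (Or.inl (by rw [Nat.mod_eq_of_lt (by omega)]; omega))
  · refine Or.inl (diag_max hn (by omega) (by omega) ?_)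
    intro u v huv hlt
    constructor
    · rintro ⟨h1, h2, h3⟩
      exact (not_crossed hE (by omega) huv hlt).1 ⟨by omega, by omega, by omega⟩
    · rintro ⟨h1, h2, h3⟩
      rcases Nat.lt_trichotomy u.1 a.1 with h|h|h
      · exact (not_crossed hE (by omega) huv hlt).2 ⟨h, by omega, by omega⟩
      · have hua : u = a := Fin.ext h
        have hPv : P v.1 := ⟨v.2, by omega, by omega, Or.inl (by rw [← hua]; exact huv)⟩
        exact hgr v.1 (by omega) (by omega) hPv
      · exact (not_crossed hEax0 (by omega) huv hlt).1 ⟨by omega, by omega, by omega⟩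

lemma outer_seer {T : PolyTri n} {a b : Fin n} (hE : Edg T a b) (hab : a.1 < b.1)
    (h3 : ¬(a.1 = 0 ∧ b.1 = n-1)) :
    ∃ y : Fin n, (y.1 < a.1 ∨ b.1 < y.1) ∧ Edg T a y ∧ Edg T b y := by
  classical
  have hbn : b.1 < n := b.2
  set P1 : ℕ → Prop := fun m => ∃ h : m < n, m < a.1 ∧ Edg T b ⟨m, h⟩ with hP1
  set P2 : ℕ → Prop := fun m => ∃ h : m < n, b.1 < m ∧ Edg T b ⟨m, h⟩ with hP2
  by_cases hca : ∃ m, P1 m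
  · obtain ⟨y0, hy0n, hy0a, hEby0, hgr⟩ :
        ∃ y0, ∃ h : y0 < n, y0 < a.1 ∧ Edg T b ⟨y0, h⟩ ∧ ∀ k, y0 < k → k ≤ n → ¬ P1 k := by
      obtain ⟨m0, hm0⟩ := hca
      obtain ⟨h, h1, h2⟩ := Nat.findGreatest_spec (le_of_lt hm0.choose) hm0
      exact ⟨_, h, h1, h2, fun k hk1 hk2 => Nat.findGreatest_is_greatest hk1 hk2⟩
    have hyv : (⟨y0, hy0n⟩ : Fin n).1 = y0 := rfl
    have hn : 3 ≤ n := by omega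
    refine ⟨⟨y0, hy0n⟩, Or.inl hy0a, ?_, hEby0⟩
    by_cases hhull : y0 + 1 = a.1
    · exact Or.inr (Or.inr (by rw [Nat.mod_eq_of_lt (by omega)]; omega))
    · have hd : s((⟨y0, hy0n⟩ : Fin n), a) ∈ T.diag := by
        refine diag_max hn (by omega) (by omega) ?_
        intro u v huv hlt
        constructor
        · rintro ⟨h1, h2, h3⟩
          rcases Nat.lt_trichotomy v.1 b.1 with h|h|h
          · exact (not_crossed hE hab huv hlt).2 ⟨by omega, by omega, h⟩
          · have hvb : v = b := Fin.ext h
            have hPu : P1 u.1 := ⟨u.2, by omega, Or.inl (by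
              rw [Sym2.eq_swap, ← hvb]; exact huv)⟩
            exact hgr u.1 (by omega) (by omega) hPu
          · exact (not_crossed (edg_symm hEby0) (by omega) huv hlt).1
              ⟨by omega, by omega, h⟩
        · rintro ⟨h1, h2, h3⟩
          exact (not_crossed (edg_symm hEby0) (by omega) huv hlt).2
            ⟨by omega, by omega, by omega⟩
      exact Or.inl (by rwa [Sym2.eq_swap])
  · have hw : ∃ m, P2 m := by
      by_cases hb1 : b.1 + 1 < n
      · exact ⟨b.1+1, hb1, by omega, Or.inr (Or.inl (Nat.mod_eq_of_lt (by omega)).symm)⟩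
      · have hb' : b.1 = n - 1 := by omega
        have ha0 : a.1 ≠ 0 := fun h => h3 ⟨h, hb'⟩
        refine absurd ⟨0, ⟨by omega, by omega, Or.inr (Or.inl ?_)⟩⟩ hca
        show (0:ℕ) = (b.1+1) % n
        rw [show b.1+1 = n by omega, Nat.mod_self]
    obtain ⟨y0, hy0n, hy0b, hEby0, hgr⟩ :
        ∃ y0, ∃ h : y0 < n, b.1 < y0 ∧ Edg T b ⟨y0, h⟩ ∧ ∀ k, y0 < k → k ≤ n → ¬ P2 k := by
      obtain ⟨m0, hm0⟩ := hw
      obtain ⟨h, h1, h2⟩ := Nat.findGreatest_spec (le_of_lt hm0.choose) hm0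
      exact ⟨_, h, h1, h2, fun k hk1 hk2 => Nat.findGreatest_is_greatest hk1 hk2⟩
    have hyv : (⟨y0, hy0n⟩ : Fin n).1 = y0 := rfl
    have hn : 3 ≤ n := by omega
    by_cases hhull : y0 = n-1 ∧ a.1 = 0
    · refine ⟨⟨y0, hy0n⟩, Or.inr hy0b, Or.inr (Or.inr ?_), hEby0⟩
      show a.1 = (y0 + 1) % n
      rw [show y0 + 1 = n by omega, Nat.mod_self]
      exact hhull.2
    · refine ⟨⟨y0, hy0n⟩, Or.inr hy0b, ?_, hEby0⟩
      refine Or.inl (diag_max hn (by omega) (by omega) ?_)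
      intro u v huv hlt
      constructor
      · rintro ⟨h1, h2, h3⟩
        rcases Nat.lt_trichotomy u.1 b.1 with h|h|h
        · exact (not_crossed hE hab huv hlt).1 ⟨by omega, h, by omega⟩
        · have hub : u = b := Fin.ext h
          have hPv : P2 v.1 := ⟨v.2, by omega, Or.inl (by rw [← hub]; exact huv)⟩
          exact hgr v.1 (by omega) (by omega) hPv
        · exact (not_crossed hEby0 (by omega) huv hlt).1 ⟨h, by omega, by omega⟩
      · rintro ⟨h1, h2, h3⟩
        rcases Nat.lt_trichotomy v.1 b.1 with h|h|h
        · exact (not_crossed hE hab huv hlt).2 ⟨by omega, by omega, h⟩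
        · have hvb : v = b := Fin.ext h
          have hPu : P1 u.1 := ⟨u.2, by omega, Or.inl (by
            rw [Sym2.eq_swap, ← hvb]; exact huv)⟩
          exact hca ⟨u.1, hPu⟩
        · exact (not_crossed hEby0 (by omega) huv hlt).2 ⟨by omega, h, by omega⟩

end Aux
namespace Aux
variable {n : ℕ}

lemma isFace_of_edg {T : PolyTri n} {x a b : Fin n} (hxa : x ≠ a) (hxb : x ≠ b) (hab : a ≠ b)
    (h1 : Edg T x a) (h2 : Edg T x b) (h3 : Edg T a b) : T.IsFace {x,a,b} := by
  constructor
  · rw [Set.ncard_eq_three]; exact ⟨x,a,b,hxa,hxb,hab,rfl⟩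
  · intro u hu v hv huv
    simp only [Set.mem_insert_iff, Set.mem_singleton_iff] at hu hv
    rcases hu with rfl|rfl|rfl <;> rcases hv with rfl|rfl|rfl <;>
      first
      | exact absurd rfl huv
      | exact adj_of_edg h1 huv
      | exact adj_of_edg h2 huv
      | exact adj_of_edg h3 huv
      | exact adj_of_edg (edg_symm h1) huv
      | exact adj_of_edg (edg_symm h2) huv
      | exact adj_of_edg (edg_symm h3) huv

lemma sees_edges {T : PolyTri n} {x a b : Fin n} (h : T.Sees x a b) :
    Edg T x a ∧ Edg T x b ∧ Edg T a b ∧ x ≠ a ∧ x ≠ b ∧ a ≠ b := by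
  obtain ⟨hxa, hxb, hcard, hadj⟩ := h
  have hab : a ≠ b := by
    rintro rfl
    have he : ({x,a,a} : Set (Fin n)) = {x,a} := by rw [Set.pair_eq_singleton]
    rw [he] at hcard
    have h1 := Set.ncard_insert_le x ({a} : Set (Fin n))
    rw [Set.ncard_singleton] at h1
    omega
  have hx : x ∈ ({x,a,b} : Set (Fin n)) := by simp
  have ha : a ∈ ({x,a,b} : Set (Fin n)) := by simp
  have hb : b ∈ ({x,a,b} : Set (Fin n)) := by simp
  exact ⟨edg_of_adj (hadj x hx a ha hxa), edg_of_adj (hadj x hx b hb hxb),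
    edg_of_adj (hadj a ha b hb hab), hxa, hxb, hab⟩

lemma sees_swap {T : PolyTri n} {x a b : Fin n} (h : T.Sees x a b) : T.Sees x b a := by
  obtain ⟨hxa, hxb, hface⟩ := h
  refine ⟨hxb, hxa, ?_⟩
  have : ({x,b,a} : Set (Fin n)) = {x,a,b} := by rw [Set.pair_comm b a]
  rwa [this]

lemma seer_unique_inner_aux {T : PolyTri n} {a b z z' : Fin n}
    (h1 : T.Sees z a b) (h2 : T.Sees z' a b)
    (hz : a.1 < z.1 ∧ z.1 < b.1) (hz' : a.1 < z'.1 ∧ z'.1 < b.1) (hlt : z.1 < z'.1) :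
    False := by
  have hbn : b.1 < n := b.2
  obtain ⟨hE1, hE2, hE3, -, -, -⟩ := sees_edges h1
  obtain ⟨hE1', hE2', -, -, -, -⟩ := sees_edges h2
  have hdiag : s(a, z') ∈ T.diag :=
    edg_diag (edg_symm hE1') (by omega) (by omega)
  exact (not_crossed hE2 (by omega) hdiag (by omega)).2 ⟨by omega, by omega, by omega⟩

lemma seer_unique_inner {T : PolyTri n} {a b z z' : Fin n}
    (h1 : T.Sees z a b) (h2 : T.Sees z' a b)
    (hz : a.1 < z.1 ∧ z.1 < b.1) (hz' : a.1 < z'.1 ∧ z'.1 < b.1) : z = z' := by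
  rcases Nat.lt_trichotomy z.1 z'.1 with h|h|h
  · exact absurd (seer_unique_inner_aux h1 h2 hz hz' h) (fun h => h)
  · exact Fin.ext h
  · exact absurd (seer_unique_inner_aux h2 h1 hz' hz h) (fun h => h)

lemma seer_unique_outer_aux {T : PolyTri n} {a b z z' : Fin n}
    (h1 : T.Sees z a b) (h2 : T.Sees z' a b) (hab : a.1 < b.1)
    (hz : z.1 < a.1 ∨ b.1 < z.1) (hz' : z'.1 < a.1 ∨ b.1 < z'.1) (hlt : z.1 < z'.1) :
    False := by
  have hbn : b.1 < n := b.2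
  obtain ⟨hE1, hE2, hE3, -, -, -⟩ := sees_edges h1
  obtain ⟨hE1', hE2', -, -, -, -⟩ := sees_edges h2
  rcases hz with hza|hzb
  · rcases hz' with hz'a|hz'b
    · -- z < z' < a : chord (z',b) crosses edge (z,a)
      have hdiag : s(z', b) ∈ T.diag := edg_diag hE2' (by omega) (by omega)
      exact (not_crossed hE1 (by omega) hdiag (by omega)).1 ⟨by omega, by omega, by omega⟩
    · -- z < a, z' > b : chord (a,z') crosses edge (z,b)
      have hdiag : s(a, z') ∈ T.diag := edg_diag (edg_symm hE1') (by omega) (by omega)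
      exact (not_crossed hE2 (by omega) hdiag (by omega)).1 ⟨by omega, by omega, by omega⟩
  · -- b < z < z' : chord (b,z') crosses edge (a,z)
    have hz'b : b.1 < z'.1 := by omega
    have hdiag : s(b, z') ∈ T.diag := edg_diag (edg_symm hE2') (by omega) (by omega)
    exact (not_crossed (edg_symm hE1) (by omega) hdiag (by omega)).1
      ⟨by omega, by omega, by omega⟩

lemma seer_unique_outer {T : PolyTri n} {a b z z' : Fin n}
    (h1 : T.Sees z a b) (h2 : T.Sees z' a b) (hab : a.1 < b.1)
    (hz : z.1 < a.1 ∨ b.1 < z.1) (hz' : z'.1 < a.1 ∨ b.1 < z'.1) : z = z' := by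
  rcases Nat.lt_trichotomy z.1 z'.1 with h|h|h
  · exact absurd (seer_unique_outer_aux h1 h2 hab hz hz' h) (fun h => h)
  · exact Fin.ext h
  · exact absurd (seer_unique_outer_aux h2 h1 hab hz' hz h) (fun h => h)

lemma flip_spec {T : PolyTri n} {e : Sym2 (Fin n)} (he : e ∈ T.diag) :
    ∃ a b x y : Fin n, e = s(a,b) ∧ a.1+2 ≤ b.1 ∧ ¬(a.1=0 ∧ b.1=n-1) ∧
      a.1 < x.1 ∧ x.1 < b.1 ∧ (y.1 < a.1 ∨ b.1 < y.1) ∧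
      T.Sees x a b ∧ T.Sees y a b ∧ ∀ z, T.Sees z a b → z = x ∨ z = y := by
  obtain ⟨a, b, rfl, h2, h3⟩ := rep_of_diag he
  have hE : Edg T a b := Or.inl he
  obtain ⟨x, hax, hxb, hEax, hExb⟩ := inner_seer hE (by omega)
  obtain ⟨y, hy, hEay, hEby⟩ := outer_seer hE (by omega) h3
  have hbn : b.1 < n := b.2
  have hsx : T.Sees x a b := by
    refine ⟨fun h => by rw [h] at hax; omega, fun h => by rw [h] at hxb; omega, ?_⟩
    exact isFace_of_edg (fun h => by rw [h] at hax; omega) (fun h => by rw [h] at hxb; omega)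
      (fun h => by rw [h] at h2; omega) (edg_symm hEax) hExb hE
  have hsy : T.Sees y a b := by
    have hya : y ≠ a := fun h => by rw [h] at hy; omega
    have hyb : y ≠ b := fun h => by rw [h] at hy; omega
    exact ⟨hya, hyb, isFace_of_edg hya hyb (fun h => by rw [h] at h2; omega)
      (edg_symm hEay) (edg_symm hEby) hE⟩
  refine ⟨a, b, x, y, rfl, h2, h3, hax, hxb, hy, hsx, hsy, ?_⟩
  intro z hz
  obtain ⟨-, -, -, hza, hzb, -⟩ := sees_edges hz
  have hza' : z.1 ≠ a.1 := fun h => hza (Fin.ext h)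
  have hzb' : z.1 ≠ b.1 := fun h => hzb (Fin.ext h)
  rcases Nat.lt_trichotomy z.1 a.1 with h|h|h
  · exact Or.inr (seer_unique_outer hz hsy (by omega) (Or.inl h) hy)
  · omega
  · rcases Nat.lt_trichotomy z.1 b.1 with h'|h'|h'
    · exact Or.inl (seer_unique_inner hz hsx ⟨h, h'⟩ ⟨hax, hxb⟩)
    · omega
    · exact Or.inr (seer_unique_outer hz hsy (by omega) (Or.inr h') hy)

/-- Core lemma: a diagonal of `T` crossing the flip of `e = s(a,b)` must be `e` itself. -/
lemma core {T : PolyTri n} {a b x y u v : Fin n}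
    (hax : a.1 < x.1) (hxb : x.1 < b.1) (hy : y.1 < a.1 ∨ b.1 < y.1)
    (hEax : Edg T a x) (hExb : Edg T x b) (hEay : Edg T a y) (hEby : Edg T b y)
    (hEab : Edg T a b)
    (hd : s(u,v) ∈ T.diag) (huv : u.1 < v.1)
    (hcr : (b.1 < y.1 ∧ ((x.1<u.1 ∧ u.1<y.1 ∧ y.1<v.1) ∨ (u.1<x.1 ∧ x.1<v.1 ∧ v.1<y.1))) ∨
           (y.1 < a.1 ∧ ((y.1<u.1 ∧ u.1<x.1 ∧ x.1<v.1) ∨ (u.1<y.1 ∧ y.1<v.1 ∧ v.1<x.1)))) :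
    u.1 = a.1 ∧ v.1 = b.1 := by
  rcases hcr with ⟨hyb, hAB⟩ | ⟨hya, hCD⟩
  · rcases hAB with ⟨h1, h2, h3⟩ | ⟨h1, h2, h3⟩
    · -- B : x<u<y<v
      exfalso
      rcases Nat.lt_trichotomy u.1 b.1 with h|h|h
      · exact (not_crossed hEab (by omega) hd huv).1 ⟨by omega, h, by omega⟩
      · exact (not_crossed hEay (by omega) hd huv).1 ⟨by omega, by omega, by omega⟩
      · exact (not_crossed hEby (by omega) hd huv).1 ⟨h, by omega, by omega⟩
    · -- A : u<x<v<y
      rcases Nat.lt_trichotomy v.1 b.1 with h|h|h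
      · exact absurd ⟨h1, h2, h⟩ (not_crossed hExb (by omega) hd huv).2
      · rcases Nat.lt_trichotomy u.1 a.1 with h'|h'|h'
        · exact absurd ⟨h', by omega, by omega⟩ (not_crossed hEay (by omega) hd huv).2
        · exact ⟨h', h⟩
        · exact absurd ⟨h', h1, by omega⟩ (not_crossed hEax (by omega) hd huv).1
      · exact absurd ⟨by omega, h, by omega⟩ (not_crossed hEby (by omega) hd huv).2
  · rcases hCD with ⟨h1, h2, h3⟩ | ⟨h1, h2, h3⟩
    · -- C : y<u<x<v
      rcases Nat.lt_trichotomy u.1 a.1 with h|h|h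
      · exfalso
        rcases Nat.lt_trichotomy v.1 b.1 with h'|h'|h'
        · exact (not_crossed hEab (by omega) hd huv).2 ⟨h, by omega, h'⟩
        · exact (not_crossed (edg_symm hEay) (by omega) hd huv).1 ⟨h1, h, by omega⟩
        · exact (not_crossed (edg_symm hEby) (by omega) hd huv).1 ⟨h1, by omega, h'⟩
      · rcases Nat.lt_trichotomy v.1 b.1 with h'|h'|h'
        · exact absurd ⟨h2, h3, h'⟩ (not_crossed hExb (by omega) hd huv).2
        · exact ⟨h, h'⟩
        · exact absurd ⟨by omega, by omega, h'⟩
            (not_crossed (edg_symm hEby) (by omega) hd huv).1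
      · exact absurd ⟨h, h2, h3⟩ (not_crossed hEax (by omega) hd huv).1
    · -- D : u<y<v<x
      exfalso
      rcases Nat.lt_trichotomy v.1 a.1 with h|h|h
      · exact (not_crossed (edg_symm hEay) (by omega) hd huv).2 ⟨h1, h2, h⟩
      · exact (not_crossed (edg_symm hEby) (by omega) hd huv).2 ⟨h1, h2, by omega⟩
      · exact (not_crossed hEab (by omega) hd huv).2 ⟨by omega, h, by omega⟩

end Aux
namespace Aux
variable {n : ℕ}

lemma flip_sorted {a b x y : Fin n} (hax : a.1<x.1) (hxb : x.1<b.1)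
    (hy : y.1<a.1 ∨ b.1<y.1) (hbn : b.1 < n) :
    ∃ p q : Fin n, s(x,y) = s(p,q) ∧ p.1+2 ≤ q.1 ∧ ¬(p.1=0 ∧ q.1=n-1) ∧
      ((p.1 = x.1 ∧ q.1 = y.1 ∧ b.1 < y.1) ∨ (p.1 = y.1 ∧ q.1 = x.1 ∧ y.1 < a.1)) := by
  rcases hy with h|h
  · exact ⟨y, x, Sym2.eq_swap, by omega, by omega, Or.inr ⟨rfl, rfl, h⟩⟩
  · exact ⟨x, y, rfl, by omega, by omega, Or.inl ⟨rfl, rfl, h⟩⟩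

lemma not_self_cross {a b x y : Fin n} (hax : a.1<x.1) (hxb : x.1<b.1)
    (hy : y.1<a.1 ∨ b.1<y.1) (hbn : b.1 < n) : ¬ Crosses s(x,y) s(x,y) := by
  obtain ⟨p, q, hpq, h2, h3, hor⟩ := flip_sorted hax hxb hy hbn
  rw [hpq, crosses_iff (by omega) (by omega)]
  omega

lemma flip_not_diag {T : PolyTri n} {a b x y : Fin n} (he : s(a,b) ∈ T.diag)
    (hab : a.1 < b.1) (hax : a.1<x.1) (hxb : x.1<b.1) (hy : y.1<a.1 ∨ b.1<y.1) :
    s(x,y) ∉ T.diag := by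
  intro hmem
  rcases hy with h|h
  · exact T.noncross _ (show s(y,x) ∈ T.diag by rwa [Sym2.eq_swap]) _ he
      ((crosses_iff (by omega) hab).2 ⟨h, hax, hxb⟩)
  · exact T.noncross _ he _ hmem ((crosses_iff hab (by omega)).2 ⟨hax, hxb, h⟩)

lemma old_vs_flip {T : PolyTri n} {a b x y : Fin n} (he : s(a,b) ∈ T.diag)
    (hax : a.1<x.1) (hxb : x.1<b.1) (hy : y.1<a.1 ∨ b.1<y.1)
    (hEax : Edg T a x) (hExb : Edg T x b) (hEay : Edg T a y) (hEby : Edg T b y)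
    {d : Sym2 (Fin n)} (hd : d ∈ T.diag) (hne : d ≠ s(a,b)) :
    ¬ Crosses d s(x,y) ∧ ¬ Crosses s(x,y) d := by
  have hbn : b.1 < n := b.2
  obtain ⟨u, v, rfl, hu2, -⟩ := rep_of_diag hd
  obtain ⟨p, q, hpq, hq2, hq3, hor⟩ := flip_sorted hax hxb hy hbn
  have hEab : Edg T a b := Or.inl he
  constructor
  · rw [hpq, crosses_iff (by omega) (by omega)]
    rintro ⟨c1, c2, c3⟩
    have hres := core hax hxb hy hEax hExb hEay hEby hEab hd (by omega) (by omega)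
    exact hne (by rw [show u = a from Fin.ext hres.1, show v = b from Fin.ext hres.2])
  · rw [hpq, crosses_iff (by omega) (by omega)]
    rintro ⟨c1, c2, c3⟩
    have hres := core hax hxb hy hEax hExb hEay hEby hEab hd (by omega) (by omega)
    exact hne (by rw [show u = a from Fin.ext hres.1, show v = b from Fin.ext hres.2])

lemma flipRel_eq {T : PolyTri n} {a b x y : Fin n}
    (huni : ∀ z, T.Sees z a b → z = x ∨ z = y)
    {c : Sym2 (Fin n)} (h : T.FlipRel s(a,b) c) : c = s(x,y) := by
  obtain ⟨a', b', x', y', heq, rfl, hne, hs1, hs2⟩ := h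
  have hsym : ∀ z, T.Sees z a' b' → T.Sees z a b := by
    intro z hz
    rcases Sym2.eq_iff.1 heq with ⟨h1, h2⟩|⟨h1, h2⟩
    · rw [h1, h2]; exact hz
    · rw [h1, h2]; exact sees_swap hz
  rcases huni x' (hsym _ hs1) with rfl|rfl <;> rcases huni y' (hsym _ hs2) with rfl|rfl
  · exact absurd rfl hne
  · rfl
  · exact Sym2.eq_swap
  · exact absurd rfl hne

lemma single_flip {T : PolyTri n} {a b x y : Fin n}
    (he : s(a,b) ∈ T.diag)
    (hax : a.1<x.1) (hxb : x.1<b.1) (hy : y.1<a.1 ∨ b.1<y.1)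
    (hsx : T.Sees x a b) (hsy : T.Sees y a b) :
    ∃ T2 : PolyTri n, T2.diag = (T.diag \ {s(a,b)}) ∪ {s(x,y)} := by
  have hbn : b.1 < n := b.2
  obtain ⟨hE1x, hE2x, hEab, -, -, -⟩ := sees_edges hsx
  obtain ⟨hE1y, hE2y, -, -, -, -⟩ := sees_edges hsy
  have hEax := edg_symm hE1x
  have hEay := edg_symm hE1y
  have hEby := edg_symm hE2y
  have hfnd : s(x,y) ∉ T.diag := flip_not_diag he (by omega) hax hxb hy
  refine ⟨⟨(T.diag \ {s(a,b)}) ∪ {s(x,y)}, ?_, ?_, ?_⟩, rfl⟩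
  · rintro e' (⟨hmem, -⟩ | rfl)
    · exact T.chord _ hmem
    · obtain ⟨p, q, hpq, h2, h3, -⟩ := flip_sorted hax hxb hy hbn
      rw [hpq]
      exact chord_of h2 h3
  · rintro e' (⟨hd, hdne⟩ | rfl) f' (⟨hf, hfne⟩ | rfl)
    · exact T.noncross _ hd _ hf
    · exact (old_vs_flip he hax hxb hy hEax hE2x hEay hEby hd (by simpa using hdne)).1
    · exact (old_vs_flip he hax hxb hy hEax hE2x hEay hEby hf (by simpa using hfne)).2
    · exact not_self_cross hax hxb hy hbn
  · have h1 : s(x,y) ∉ T.diag \ {s(a,b)} := fun h => hfnd h.1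
    have h2 : 0 < T.diag.ncard := (Set.ncard_pos (Set.toFinite _)).2 ⟨_, he⟩
    rw [Set.union_singleton, Set.ncard_insert_of_notMem h1 (Set.toFinite _),
      Set.ncard_diff_singleton_of_mem he, T.card_diag]
    rw [T.card_diag] at h2
    omega

/-- Flips of distinct diagonals are distinct: a flip of `e1` equal to the flip of `e2`
forces `e2 = e1`. -/
lemma flip_eq_flip {T : PolyTri n} {a1 b1 x1 y1 a2 b2 x2 y2 : Fin n}
    (he1 : s(a1,b1) ∈ T.diag)
    (hax1 : a1.1<x1.1) (hxb1 : x1.1<b1.1) (hy1 : y1.1<a1.1 ∨ b1.1<y1.1)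
    (hsx1 : T.Sees x1 a1 b1) (hsy1 : T.Sees y1 a1 b1)
    (he2 : s(a2,b2) ∈ T.diag) (h2ab : a2.1 < b2.1)
    (hax2 : a2.1<x2.1) (hxb2 : x2.1<b2.1) (hy2 : y2.1<a2.1 ∨ b2.1<y2.1)
    (heqf : s(x1,y1) = s(x2,y2)) : s(a2,b2) = s(a1,b1) := by
  have hbn1 : b1.1 < n := b1.2
  have hbn2 : b2.1 < n := b2.2
  obtain ⟨hE1x, hE2x, hEab, -, -, -⟩ := sees_edges hsx1
  obtain ⟨hE1y, hE2y, -, -, -, -⟩ := sees_edges hsy1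
  obtain ⟨p1, q1, hpq1, hs21, hs31, hor1⟩ := flip_sorted hax1 hxb1 hy1 hbn1
  obtain ⟨p2, q2, hpq2, hs22, hs32, hor2⟩ := flip_sorted hax2 hxb2 hy2 hbn2
  obtain ⟨hpp, hqq⟩ := sorted_rep_unique (hpq1.symm.trans (heqf.trans hpq2))
    (by omega) (by omega)
  have hpp' := congrArg Fin.val hpp
  have hqq' := congrArg Fin.val hqq
  have hres := core hax1 hxb1 hy1 (edg_symm hE1x) hE2x (edg_symm hE1y) (edg_symm hE2y)
    hEab he2 h2ab (by omega)
  rw [show a2 = a1 from Fin.ext hres.1, show b2 = b1 from Fin.ext hres.2]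

end Aux
namespace Aux
variable {n : ℕ}

lemma flip_vs_flip {T : PolyTri n} {S : Set (Sym2 (Fin n))} (hS : S ⊆ T.diag)
    (hmatch : ∀ e ∈ S, ∀ e' ∈ S, e ≠ e' →
      ¬ ∃ f : Set (Fin n), T.IsFace f ∧ (∀ x ∈ e, x ∈ f) ∧ (∀ x ∈ e', x ∈ f))
    {a1 b1 x1 y1 a2 b2 x2 y2 : Fin n}
    (he1S : s(a1,b1) ∈ S) (he2S : s(a2,b2) ∈ S) (hne : s(a1,b1) ≠ s(a2,b2))
    (hax1 : a1.1<x1.1) (hxb1 : x1.1<b1.1) (hy1 : y1.1<a1.1 ∨ b1.1<y1.1)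
    (hsx1 : T.Sees x1 a1 b1) (hsy1 : T.Sees y1 a1 b1)
    (hab2 : a2.1 < b2.1)
    (hax2 : a2.1<x2.1) (hxb2 : x2.1<b2.1) (hy2 : y2.1<a2.1 ∨ b2.1<y2.1)
    (hsx2 : T.Sees x2 a2 b2) (hsy2 : T.Sees y2 a2 b2) :
    ¬ Crosses s(x1,y1) s(x2,y2) := by
  intro hcross
  obtain ⟨T2, hT2⟩ := single_flip (hS he2S) hax2 hxb2 hy2 hsx2 hsy2
  have hmem2 : s(x2,y2) ∈ T2.diag := by rw [hT2]; exact Or.inr rfl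
  obtain ⟨hE1x, hE2x, hEab, -, -, -⟩ := sees_edges hsx1
  obtain ⟨hE1y, hE2y, -, -, -, -⟩ := sees_edges hsy1
  have hfx : T.IsFace {x1,a1,b1} := hsx1.2.2
  have hfy : T.IsFace {y1,a1,b1} := hsy1.2.2
  have hsub1x : ∀ z ∈ s(a1,b1), z ∈ ({x1,a1,b1} : Set (Fin n)) := by
    intro z hz; rcases Sym2.mem_iff.1 hz with rfl|rfl <;> simp
  have hsub1y : ∀ z ∈ s(a1,b1), z ∈ ({y1,a1,b1} : Set (Fin n)) := by
    intro z hz; rcases Sym2.mem_iff.1 hz with rfl|rfl <;> simp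
  have hside : ∀ (f : Set (Fin n)), T.IsFace f → (∀ z ∈ s(a1,b1), z ∈ f) →
      ∀ p q : Fin n, p ∈ f → q ∈ f → s(p,q) ≠ s(a2,b2) := by
    intro f hf hsub p q hp hq heq
    refine hmatch _ he1S _ he2S hne ⟨f, hf, hsub, ?_⟩
    rw [← heq]
    intro z hz
    rcases Sym2.mem_iff.1 hz with rfl|rfl
    exacts [hp, hq]
  have htrans : ∀ p q : Fin n, Edg T p q → s(p,q) ≠ s(a2,b2) → Edg T2 p q := by
    intro p q h hne'
    rcases h with h|h|h
    · exact Or.inl (by rw [hT2]; exact Or.inl ⟨h, by simpa using hne'⟩)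
    · exact Or.inr (Or.inl h)
    · exact Or.inr (Or.inr h)
  have hE1 : Edg T2 a1 x1 := htrans _ _ (edg_symm hE1x)
    (hside _ hfx hsub1x a1 x1 (by simp) (by simp))
  have hE2 : Edg T2 x1 b1 := htrans _ _ hE2x
    (hside _ hfx hsub1x x1 b1 (by simp) (by simp))
  have hE3 : Edg T2 a1 y1 := htrans _ _ (edg_symm hE1y)
    (hside _ hfy hsub1y a1 y1 (by simp) (by simp))
  have hE4 : Edg T2 b1 y1 := htrans _ _ (edg_symm hE2y)
    (hside _ hfy hsub1y b1 y1 (by simp) (by simp))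
  have hE5 : Edg T2 a1 b1 := htrans _ _ hEab
    (hside _ hfx hsub1x a1 b1 (by simp) (by simp))
  obtain ⟨p1, q1, hpq1, hs21, hs31, hor1⟩ := flip_sorted hax1 hxb1 hy1 b1.2
  obtain ⟨p2, q2, hpq2, hs22, hs32, hor2⟩ := flip_sorted hax2 hxb2 hy2 b2.2
  rw [hpq1, hpq2, crosses_iff (by omega) (by omega)] at hcross
  have hmem2' : s(p2,q2) ∈ T2.diag := by rw [← hpq2]; exact hmem2
  have hres := core (T := T2) hax1 hxb1 hy1 hE1 hE2 hE3 hE4 hE5 hmem2' (by omega) (by omega)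
  have heqe : s(x2,y2) = s(a1,b1) := by
    rw [hpq2, show p2 = a1 from Fin.ext hres.1, show q2 = b1 from Fin.ext hres.2]
  rcases hy2 with h|h
  · exact T.noncross _ (show s(y2,x2) ∈ T.diag by rw [Sym2.eq_swap, heqe]; exact hS he1S)
      _ (hS he2S) ((crosses_iff (by omega) hab2).2 ⟨h, hax2, hxb2⟩)
  · exact T.noncross _ (hS he2S) _ (show s(x2,y2) ∈ T.diag by rw [heqe]; exact hS he1S)
      ((crosses_iff hab2 (by omega)).2 ⟨hax2, hxb2, h⟩)

lemma cfg1 {T T' : PolyTri n} {S : Set (Sym2 (Fin n))} (hS : S ⊆ T.diag)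
    (hdiag : T'.diag = (T.diag \ S) ∪ {e' | ∃ e ∈ S, T.FlipRel e e'})
    {p q r : Fin n} (hpq : p.1<q.1) (hqr : q.1<r.1)
    (he1 : s(p,q) ∈ S) (he2 : s(q,r) ∈ S)
    (hs1 : T.Sees r p q) (hs2 : T.Sees p q r) : False := by
  obtain ⟨a,b,x,y,heq,h2,h3,hax,hxb,hy,hsx,hsy,huni⟩ := flip_spec (hS he1)
  obtain ⟨hpa, hqb⟩ := sorted_rep_unique heq hpq (by omega)
  subst hpa; subst hqb
  have hry : r = y := by
    rcases huni r hs1 with h|h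
    · have := congrArg Fin.val h; omega
    · exact h
  subst hry
  obtain ⟨a',b',x',y',heq',h2',h3',hax',hxb',hy',hsx',hsy',huni'⟩ := flip_spec (hS he2)
  obtain ⟨hqa, hrb⟩ := sorted_rep_unique heq' hqr (by omega)
  subst hqa; subst hrb
  have hpy : p = y' := by
    rcases huni' p hs2 with h|h
    · have := congrArg Fin.val h; omega
    · exact h
  subst hpy
  have mem1 : s(x, r) ∈ T'.diag := by
    rw [hdiag]
    exact Or.inr ⟨s(p, q), he1, p, q, x, r, rfl, rfl,
      fun h => by have := congrArg Fin.val h; omega, hsx, hsy⟩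
  have mem2 : s(x', p) ∈ T'.diag := by
    rw [hdiag]
    exact Or.inr ⟨s(q, r), he2, q, r, x', p, rfl, rfl,
      fun h => by have := congrArg Fin.val h; omega, hsx', hsy'⟩
  have mem2' : s(p, x') ∈ T'.diag := by rwa [Sym2.eq_swap]
  exact T'.noncross _ mem2' _ mem1
    ((crosses_iff (by omega) (by omega)).2 ⟨by omega, by omega, by omega⟩)

lemma cfg2 {T T' : PolyTri n} {S : Set (Sym2 (Fin n))} (hS : S ⊆ T.diag)
    (hdiag : T'.diag = (T.diag \ S) ∪ {e' | ∃ e ∈ S, T.FlipRel e e'})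
    {p q r : Fin n} (hpq : p.1<q.1) (hqr : q.1<r.1)
    (he1 : s(p,q) ∈ S) (he2 : s(p,r) ∈ S)
    (hs1 : T.Sees r p q) (hs2 : T.Sees q p r) : False := by
  obtain ⟨a,b,x,y,heq,h2,h3,hax,hxb,hy,hsx,hsy,huni⟩ := flip_spec (hS he1)
  obtain ⟨hpa, hqb⟩ := sorted_rep_unique heq hpq (by omega)
  subst hpa; subst hqb
  have hry : r = y := by
    rcases huni r hs1 with h|h
    · have := congrArg Fin.val h; omega
    · exact h
  subst hry
  obtain ⟨a',b',x',y',heq',h2',h3',hax',hxb',hy',hsx',hsy',huni'⟩ := flip_spec (hS he2)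
  obtain ⟨hpa', hrb⟩ := sorted_rep_unique heq' (by omega) (by omega)
  subst hpa'; subst hrb
  have hqx : q = x' := by
    rcases huni' q hs2 with h|h
    · exact h
    · have := congrArg Fin.val h; omega
  subst hqx
  have mem1 : s(x, r) ∈ T'.diag := by
    rw [hdiag]
    exact Or.inr ⟨s(p, q), he1, p, q, x, r, rfl, rfl,
      fun h => by have := congrArg Fin.val h; omega, hsx, hsy⟩
  have mem2 : s(q, y') ∈ T'.diag := by
    rw [hdiag]
    exact Or.inr ⟨s(p, r), he2, p, r, q, y', rfl, rfl,
      fun h => by have := congrArg Fin.val h; omega, hsx', hsy'⟩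
  rcases hy' with h|h
  · have mem2' : s(y', q) ∈ T'.diag := by rwa [Sym2.eq_swap]
    exact T'.noncross _ mem2' _ mem1
      ((crosses_iff (by omega) (by omega)).2 ⟨by omega, by omega, by omega⟩)
  · exact T'.noncross _ mem1 _ mem2
      ((crosses_iff (by omega) (by omega)).2 ⟨by omega, by omega, by omega⟩)

lemma cfg3 {T T' : PolyTri n} {S : Set (Sym2 (Fin n))} (hS : S ⊆ T.diag)
    (hdiag : T'.diag = (T.diag \ S) ∪ {e' | ∃ e ∈ S, T.FlipRel e e'})
    {p q r : Fin n} (hpq : p.1<q.1) (hqr : q.1<r.1)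
    (he1 : s(q,r) ∈ S) (he2 : s(p,r) ∈ S)
    (hs1 : T.Sees p q r) (hs2 : T.Sees q p r) : False := by
  obtain ⟨a,b,x,y,heq,h2,h3,hax,hxb,hy,hsx,hsy,huni⟩ := flip_spec (hS he1)
  obtain ⟨hqa, hrb⟩ := sorted_rep_unique heq hqr (by omega)
  subst hqa; subst hrb
  have hpy : p = y := by
    rcases huni p hs1 with h|h
    · have := congrArg Fin.val h; omega
    · exact h
  subst hpy
  obtain ⟨a',b',x',y',heq',h2',h3',hax',hxb',hy',hsx',hsy',huni'⟩ := flip_spec (hS he2)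
  obtain ⟨hpa', hrb'⟩ := sorted_rep_unique heq' (by omega) (by omega)
  subst hpa'; subst hrb'
  have hqx : q = x' := by
    rcases huni' q hs2 with h|h
    · exact h
    · have := congrArg Fin.val h; omega
  subst hqx
  have mem1 : s(x, p) ∈ T'.diag := by
    rw [hdiag]
    exact Or.inr ⟨s(q, r), he1, q, r, x, p, rfl, rfl,
      fun h => by have := congrArg Fin.val h; omega, hsx, hsy⟩
  have mem1' : s(p, x) ∈ T'.diag := by rwa [Sym2.eq_swap]
  have mem2 : s(q, y') ∈ T'.diag := by
    rw [hdiag]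
    exact Or.inr ⟨s(p, r), he2, p, r, q, y', rfl, rfl,
      fun h => by have := congrArg Fin.val h; omega, hsx', hsy'⟩
  rcases hy' with h|h
  · have mem2' : s(y', q) ∈ T'.diag := by rwa [Sym2.eq_swap]
    exact T'.noncross _ mem2' _ mem1'
      ((crosses_iff (by omega) (by omega)).2 ⟨by omega, by omega, by omega⟩)
  · exact T'.noncross _ mem1' _ mem2
      ((crosses_iff (by omega) (by omega)).2 ⟨by omega, by omega, by omega⟩)

end Aux

namespace Aux
variable {n : ℕ}

lemma face_sorted {T : PolyTri n} {f : Set (Fin n)} (hf : T.IsFace f) :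
    ∃ p q r : Fin n, p.1 < q.1 ∧ q.1 < r.1 ∧ f = {p,q,r} := by
  obtain ⟨c1, c2, c3, h12, h13, h23, rfl⟩ := Set.ncard_eq_three.1 hf.1
  have d12 : c1.1 ≠ c2.1 := fun h => h12 (Fin.ext h)
  have d13 : c1.1 ≠ c3.1 := fun h => h13 (Fin.ext h)
  have d23 : c2.1 ≠ c3.1 := fun h => h23 (Fin.ext h)
  rcases Nat.lt_or_ge c1.1 c2.1 with h1|h1
  · rcases Nat.lt_or_ge c2.1 c3.1 with h2|h2
    · exact ⟨c1, c2, c3, h1, h2, rfl⟩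
    · rcases Nat.lt_or_ge c1.1 c3.1 with h3|h3
      · exact ⟨c1, c3, c2, h3, by omega, by ext z; simp; tauto⟩
      · exact ⟨c3, c1, c2, by omega, h1, by ext z; simp; tauto⟩
  · rcases Nat.lt_or_ge c1.1 c3.1 with h2|h2
    · exact ⟨c2, c1, c3, by omega, h2, by ext z; simp; tauto⟩
    · rcases Nat.lt_or_ge c2.1 c3.1 with h3|h3
      · exact ⟨c2, c3, c1, h3, by omega, by ext z; simp; tauto⟩
      · exact ⟨c3, c2, c1, by omega, by omega, by ext z; simp; tauto⟩

lemma pair_in_triple {a b p q r : Fin n} (hab : a.1<b.1) (hpq : p.1<q.1) (hqr : q.1<r.1)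
    (ha : a = p ∨ a = q ∨ a = r) (hb : b = p ∨ b = q ∨ b = r) :
    (a = p ∧ b = q) ∨ (a = p ∧ b = r) ∨ (a = q ∧ b = r) := by
  have hap := fun (h : a = p) => congrArg Fin.val h
  rcases ha with rfl|rfl|rfl <;> rcases hb with rfl|rfl|rfl <;>
    first
    | exact Or.inl ⟨rfl, rfl⟩
    | exact Or.inr (Or.inl ⟨rfl, rfl⟩)
    | exact Or.inr (Or.inr ⟨rfl, rfl⟩)
    | exact absurd hab (by omega)

end Aux

open Aux

/-- A set `S` of internal edges of a maximal outerplanar graph is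
simultaneously flippable iff the corresponding dual edges form a matching in
the dual tree, i.e. no two edges of `S` lie on a common internal face. -/
theorem stmt11 {n : ℕ} (hn : 3 ≤ n) (T : PolyTri n)
    (S : Set (Sym2 (Fin n))) (hS : S ⊆ T.diag) :
    T.SimFlippable S ↔
      ∀ e ∈ S, ∀ e' ∈ S, e ≠ e' →
        ¬ ∃ f : Set (Fin n), T.IsFace f ∧ (∀ x ∈ e, x ∈ f) ∧
          (∀ x ∈ e', x ∈ f) := by
  constructor
  · rintro ⟨T', hS', hdiag⟩ e he e' he' hne ⟨f, hf, hef, he'f⟩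
    obtain ⟨p, q, r, hpq, hqr, rfl⟩ := face_sorted hf
    obtain ⟨a, b, heab, h2, -⟩ := rep_of_diag (hS he)
    obtain ⟨c, d, hecd, h2', -⟩ := rep_of_diag (hS he')
    have hamem := hef a (by rw [heab]; exact Sym2.mem_mk_left a b)
    have hbmem := hef b (by rw [heab]; exact Sym2.mem_mk_right a b)
    have hcmem := he'f c (by rw [hecd]; exact Sym2.mem_mk_left c d)
    have hdmem := he'f d (by rw [hecd]; exact Sym2.mem_mk_right c d)
    simp only [Set.mem_insert_iff, Set.mem_singleton_iff] at hamem hbmem hcmem hdmem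
    have hfS1 : T.Sees r p q := by
      refine ⟨fun h => by have := congrArg Fin.val h; omega,
        fun h => by have := congrArg Fin.val h; omega, ?_⟩
      have hperm : ({r,p,q} : Set (Fin n)) = {p,q,r} := by
        rw [Set.insert_comm, Set.pair_comm r q]
      rwa [hperm]
    have hfS2 : T.Sees p q r :=
      ⟨fun h => by have := congrArg Fin.val h; omega,
        fun h => by have := congrArg Fin.val h; omega, hf⟩
    have hfS3 : T.Sees q p r := by
      refine ⟨fun h => by have := congrArg Fin.val h; omega,
        fun h => by have := congrArg Fin.val h; omega, ?_⟩
      have hperm : ({q,p,r} : Set (Fin n)) = {p,q,r} := Set.insert_comm q p {r}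
      rwa [hperm]
    have hA := pair_in_triple (show a.1<b.1 by omega) hpq hqr hamem hbmem
    have hB := pair_in_triple (show c.1<d.1 by omega) hpq hqr hcmem hdmem
    rcases hA with ⟨rfl, rfl⟩|⟨rfl, rfl⟩|⟨rfl, rfl⟩ <;>
      rcases hB with ⟨rfl, rfl⟩|⟨rfl, rfl⟩|⟨rfl, rfl⟩
    · exact hne (heab.trans hecd.symm)
    · exact cfg2 hS hdiag hpq hqr (heab ▸ he) (hecd ▸ he') hfS1 hfS3
    · exact cfg1 hS hdiag hpq hqr (heab ▸ he) (hecd ▸ he') hfS1 hfS2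
    · exact cfg2 hS hdiag hpq hqr (hecd ▸ he') (heab ▸ he) hfS1 hfS3
    · exact hne (heab.trans hecd.symm)
    · exact cfg3 hS hdiag hpq hqr (hecd ▸ he') (heab ▸ he) hfS2 hfS3
    · exact cfg1 hS hdiag hpq hqr (hecd ▸ he') (heab ▸ he) hfS1 hfS2
    · exact cfg3 hS hdiag hpq hqr (heab ▸ he) (hecd ▸ he') hfS2 hfS3
    · exact hne (heab.trans hecd.symm)
  · intro hmatch
    classical
    have hdata : ∀ e : Sym2 (Fin n), ∃ a b x y : Fin n, e ∈ S →
        e = s(a,b) ∧ a.1+2 ≤ b.1 ∧ ¬(a.1=0 ∧ b.1=n-1) ∧ a.1<x.1 ∧ x.1<b.1 ∧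
        (y.1<a.1 ∨ b.1<y.1) ∧ T.Sees x a b ∧ T.Sees y a b ∧
        (∀ z, T.Sees z a b → z = x ∨ z = y) := by
      intro e
      by_cases he : e ∈ S
      · obtain ⟨a,b,x,y,p1,p2,p3,p4,p5,p6,p7,p8,p9⟩ := flip_spec (hS he)
        exact ⟨a,b,x,y, fun _ => ⟨p1,p2,p3,p4,p5,p6,p7,p8,p9⟩⟩
      · exact ⟨⟨0, by omega⟩, ⟨0, by omega⟩, ⟨0, by omega⟩, ⟨0, by omega⟩,
          fun h => absurd h he⟩
    choose A B X Y hdat using hdata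
    have hNchar : {e' | ∃ e ∈ S, T.FlipRel e e'} = (fun e => s(X e, Y e)) '' S := by
      ext c
      constructor
      · rintro ⟨e, he, hrel⟩
        obtain ⟨h1,h2,h3,h4,h5,h6,h7,h8,h9⟩ := hdat e he
        exact ⟨e, he, (flipRel_eq h9 (h1 ▸ hrel)).symm⟩
      · rintro ⟨e, he, rfl⟩
        obtain ⟨h1,h2,h3,h4,h5,h6,h7,h8,h9⟩ := hdat e he
        exact ⟨e, he, A e, B e, X e, Y e, h1, rfl,
          fun h => by have := congrArg Fin.val h; omega, h7, h8⟩
    refine ⟨⟨(T.diag \ S) ∪ {e' | ∃ e ∈ S, T.FlipRel e e'}, ?_, ?_, ?_⟩, hS, rfl⟩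
    · rintro e' (⟨hd, -⟩ | hmem)
      · exact T.chord _ hd
      · rw [hNchar] at hmem
        obtain ⟨e, he, rfl⟩ := hmem
        obtain ⟨h1,h2,h3,h4,h5,h6,h7,h8,h9⟩ := hdat e he
        obtain ⟨pp, qq, hpq', hh2, hh3, -⟩ := flip_sorted h4 h5 h6 (B e).2
        obtain ⟨u, v, huv, hx1, hx2, hx3⟩ := chord_of hh2 hh3
        exact ⟨u, v, by show s(X e, Y e) = s(u,v); rw [hpq']; exact huv, hx1, hx2, hx3⟩
    · have hvs : ∀ d ∈ T.diag \ S, ∀ e ∈ S,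
          ¬ Crosses d s(X e, Y e) ∧ ¬ Crosses s(X e, Y e) d := by
        intro d hd e he
        obtain ⟨h1,h2,h3,h4,h5,h6,h7,h8,h9⟩ := hdat e he
        obtain ⟨hE1x, hE2x, hEab, -, -, -⟩ := sees_edges h7
        obtain ⟨hE1y, hE2y, -, -, -, -⟩ := sees_edges h8
        refine old_vs_flip (by rw [← h1]; exact hS he) h4 h5 h6
          (edg_symm hE1x) hE2x (edg_symm hE1y) (edg_symm hE2y) hd.1 ?_
        intro hh
        exact hd.2 (by rw [hh, ← h1]; exact he)
      rintro c1 (hc1 | hc1) c2 (hc2 | hc2)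
      · exact T.noncross _ hc1.1 _ hc2.1
      · rw [hNchar] at hc2
        obtain ⟨e2, he2, rfl⟩ := hc2
        exact (hvs _ hc1 _ he2).1
      · rw [hNchar] at hc1
        obtain ⟨e1, he1, rfl⟩ := hc1
        exact (hvs _ hc2 _ he1).2
      · rw [hNchar] at hc1 hc2
        obtain ⟨e1, he1, rfl⟩ := hc1
        obtain ⟨e2, he2, rfl⟩ := hc2
        obtain ⟨h1,h2,h3,h4,h5,h6,h7,h8,h9⟩ := hdat e1 he1
        obtain ⟨g1,g2,g3,g4,g5,g6,g7,g8,g9⟩ := hdat e2 he2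
        by_cases heq : e1 = e2
        · subst heq
          exact not_self_cross h4 h5 h6 (B e1).2
        · exact flip_vs_flip hS hmatch (by rw [← h1]; exact he1) (by rw [← g1]; exact he2)
            (fun hh => heq (by rw [h1, g1, hh])) h4 h5 h6 h7 h8 (by omega) g4 g5 g6 g7 g8
    · have hinj : Set.InjOn (fun e => s(X e, Y e)) S := by
        intro e1 he1 e2 he2 heq
        obtain ⟨h1,h2,h3,h4,h5,h6,h7,h8,h9⟩ := hdat e1 he1
        obtain ⟨g1,g2,g3,g4,g5,g6,g7,g8,g9⟩ := hdat e2 he2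
        have hres := flip_eq_flip (by rw [← h1]; exact hS he1) h4 h5 h6 h7 h8
          (by rw [← g1]; exact hS he2) (by omega) g4 g5 g6 heq
        rw [g1, h1, hres]
      have hdisj : Disjoint (T.diag \ S) {e' | ∃ e ∈ S, T.FlipRel e e'} := by
        rw [Set.disjoint_left]
        intro c hc hcN
        rw [hNchar] at hcN
        obtain ⟨e, he, rfl⟩ := hcN
        obtain ⟨h1,h2,h3,h4,h5,h6,h7,h8,h9⟩ := hdat e he
        exact flip_not_diag (by rw [← h1]; exact hS he) (by omega) h4 h5 h6 hc.1
      rw [Set.ncard_union_eq hdisj (Set.toFinite _) (Set.toFinite _), hNchar,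
        Set.ncard_image_of_injOn hinj, Set.ncard_diff hS, T.card_diag]
      have hSle : S.ncard ≤ n-3 := by
        rw [← T.card_diag]; exact Set.ncard_le_ncard hS (Set.toFinite _)
      omega
end

section
/- Every maximal outerplanar graph on n vertices has a simultaneously flippable set of at least (n−3)/3 internal edges. -/
namespace PT

open PolyTri

variable {n : ℕ} (T : PolyTri n)

lemma crosses_iff {a b c d : Fin n} (hab : a < b) (hcd : c < d) :
    Crosses s(a,b) s(c,d) ↔ (a < c ∧ c < b ∧ b < d) := by
  constructor
  · rintro ⟨a', b', c', d', h1, h2, h3, h4, h5⟩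
    have hab' : a' < b' := h3.trans h4
    have hcd' : c' < d' := h4.trans h5
    rcases Sym2.eq_iff.1 h1 with ⟨rfl, rfl⟩ | ⟨rfl, rfl⟩
    · rcases Sym2.eq_iff.1 h2 with ⟨rfl, rfl⟩ | ⟨rfl, rfl⟩
      · exact ⟨h3, h4, h5⟩
      · exact absurd hcd (by simp [hcd'.not_gt, lt_asymm hcd'])
    · exact absurd hab (by simp [lt_asymm hab'])
  · rintro ⟨h1, h2, h3⟩
    exact ⟨a, b, c, d, rfl, rfl, h1, h2, h3⟩

/-- a "free" edge: side of a region: either a polygon edge or a diagonal -/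
def Free (a b : Fin n) : Prop :=
  a < b ∧ (b.val = a.val + 1 ∨ (a.val = 0 ∧ b.val = n-1) ∨ s(a,b) ∈ T.diag)

lemma diag_rep {e : Sym2 (Fin n)} (he : e ∈ T.diag) :
    ∃ a b : Fin n, e = s(a,b) ∧ a.val + 2 ≤ b.val ∧ ¬ (a.val = 0 ∧ b.val = n-1) := by
  obtain ⟨a, b, rfl, hne, h1, h2⟩ := T.chord _ he
  have hb := b.isLt; have ha := a.isLt
  rcases lt_or_gt_of_ne hne with h | h
  · refine ⟨a, b, rfl, ?_, ?_⟩
    · have : (a.val + 1) % n = a.val + 1 := Nat.mod_eq_of_lt (by omega)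
      omega
    · rintro ⟨h0, hn1⟩
      apply h2
      have hb1 : b.val + 1 = n := by omega
      have : (b.val + 1) % n = 0 := by rw [hb1, Nat.mod_self]
      omega
  · refine ⟨b, a, Sym2.eq_swap, ?_, ?_⟩
    · have : (b.val + 1) % n = b.val + 1 := Nat.mod_eq_of_lt (by omega)
      omega
    · rintro ⟨h0, hn1⟩
      apply h1
      have ha1 : a.val + 1 = n := by omega
      have : (a.val + 1) % n = 0 := by rw [ha1, Nat.mod_self]
      omega

lemma free_lt {a b : Fin n} (h : Free T a b) : a < b := h.1

/-- Nothing in `diag` crosses a free edge. -/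
lemma free_nocross {a b c d : Fin n} (h : Free T a b) (hcd : c < d)
    (hf : s(c,d) ∈ T.diag) :
    ¬ Crosses s(a,b) s(c,d) ∧ ¬ Crosses s(c,d) s(a,b) := by
  obtain ⟨hab, hcase⟩ := h
  have hd := d.isLt
  rcases hcase with h1 | ⟨h1, h2⟩ | h1
  · constructor
    · rw [crosses_iff hab hcd]; rintro ⟨u1, u2, u3⟩
      have := Fin.lt_def.1 u1; have := Fin.lt_def.1 u2; omega
    · rw [crosses_iff hcd hab]; rintro ⟨u1, u2, u3⟩
      have := Fin.lt_def.1 u2; have := Fin.lt_def.1 u3; omega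
  · constructor
    · rw [crosses_iff hab hcd]; rintro ⟨u1, u2, u3⟩
      have := Fin.lt_def.1 u3; omega
    · rw [crosses_iff hcd hab]; rintro ⟨u1, u2, u3⟩
      have := Fin.lt_def.1 u2; omega
  · exact ⟨T.noncross _ h1 _ hf, T.noncross _ hf _ h1⟩

lemma free_adj {a b : Fin n} (hn : 3 ≤ n) (h : Free T a b) : T.Adj a b := by
  obtain ⟨hab, hcase⟩ := h
  have hb := b.isLt
  have hab' := Fin.lt_def.1 hab
  refine ⟨hab.ne, ?_⟩
  rcases hcase with h1 | ⟨h1, h2⟩ | h1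
  · left; rw [h1, Nat.mod_eq_of_lt (by omega)]
  · right; left
    have hb1 : b.val + 1 = n := by omega
    rw [hb1, Nat.mod_self]; omega
  · right; right; exact h1

/-- For a < b, the useful normalized form of adjacency. -/
lemma adj_iff_of_lt {a b : Fin n} (hn : 3 ≤ n) (hab : a < b) :
    T.Adj a b ↔ (b.val = a.val + 1 ∨ (a.val = 0 ∧ b.val = n-1) ∨ s(a,b) ∈ T.diag) := by
  have hb := b.isLt
  have hab' := Fin.lt_def.1 hab
  constructor
  · rintro ⟨-, h | h | h⟩
    · left; rwa [Nat.mod_eq_of_lt (by omega)] at h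
    · right; left
      rcases Nat.lt_or_ge (b.val + 1) n with hlt | hge
      · rw [Nat.mod_eq_of_lt hlt] at h; omega
      · have hb1 : b.val + 1 = n := by omega
        rw [hb1, Nat.mod_self] at h
        omega
    · right; right; exact h
  · intro h; exact (free_adj T hn ⟨hab, h⟩).imp id id

lemma adj_symm {a b : Fin n} (h : T.Adj a b) : T.Adj b a := by
  obtain ⟨hne, hc⟩ := h
  refine ⟨hne.symm, ?_⟩
  rcases hc with h | h | h
  · right; left; exact h
  · left; exact h
  · right; right; rwa [Sym2.eq_swap]

lemma free_is_adj_or_diag {a b : Fin n} (hn : 3 ≤ n) (hab : a < b) (h : T.Adj a b) :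
    Free T a b := ⟨hab, (adj_iff_of_lt T hn hab).1 h⟩



/-- abstract counting lemma over ℕ pairs -/
def W (R : Finset (ℕ×ℕ)) (c d : ℕ) : Finset (ℕ×ℕ) :=
  R.filter (fun p => c ≤ p.1 ∧ p.2 ≤ d ∧ p ≠ (c,d))

def Wf (R : Finset (ℕ×ℕ)) (c d : ℕ) : Finset (ℕ×ℕ) :=
  R.filter (fun p => c ≤ p.1 ∧ p.2 ≤ d)

lemma natBound (R : Finset (ℕ×ℕ)) (hlen : ∀ p ∈ R, p.1 + 2 ≤ p.2)
    (hnc : ∀ p ∈ R, ∀ q ∈ R, ¬(p.1 < q.1 ∧ q.1 < p.2 ∧ p.2 < q.2)) :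
    ∀ k c d, d - c ≤ k → (W R c d).card ≤ d - c - 2 := by
  intro k
  induction k using Nat.strong_induction_on with
  | _ k IH =>
  intro c d hk
  have hWf : ∀ c' d', d' - c' < k → (Wf R c' d').card ≤ d' - c' - 1 := by
    intro c' d' hlt
    rcases Nat.lt_or_ge (d' - c') 2 with hsm | hbig
    · have : Wf R c' d' = ∅ := by
        rw [Finset.eq_empty_iff_forall_notMem]
        intro p hp
        rw [Wf, Finset.mem_filter] at hp
        have := hlen p hp.1
        omega
      rw [this]; simp
    · have hsub : Wf R c' d' ⊆ insert (c',d') (W R c' d') := by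
        intro p hp
        rw [Wf, Finset.mem_filter] at hp
        rcases eq_or_ne p (c',d') with rfl | hne
        · exact Finset.mem_insert_self _ _
        · exact Finset.mem_insert_of_mem (by rw [W, Finset.mem_filter]; exact ⟨hp.1, hp.2.1, hp.2.2, hne⟩)
      calc (Wf R c' d').card ≤ (insert (c',d') (W R c' d')).card := Finset.card_le_card hsub
        _ ≤ (W R c' d').card + 1 := Finset.card_insert_le _ _
        _ ≤ (d' - c' - 2) + 1 := by
            have := IH (d'-c') hlt c' d' le_rfl
            omega
        _ ≤ d' - c' - 1 := by omega
  rcases Finset.eq_empty_or_nonempty (W R c d) with he | hne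
  · rw [he]; simp
  · obtain ⟨p0, hp0, hmax⟩ := Finset.exists_max_image (W R c d) (fun p => p.2 - p.1) hne
    obtain ⟨e, f⟩ := p0
    rw [W, Finset.mem_filter] at hp0
    obtain ⟨hp0R, hce, hfd, hnefull⟩ := hp0
    have hef : e + 2 ≤ f := hlen _ hp0R
    have hlt : f - e < d - c := by
      rcases Nat.lt_or_ge (f - e) (d - c) with h | h
      · exact h
      · exfalso; apply hnefull; simp at hce hfd ⊢; constructor <;> omega
    have hsub : W R c d ⊆ insert (e,f) ((W R e f) ∪ (Wf R c e) ∪ (Wf R f d)) := by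
      intro q hq
      rcases eq_or_ne q (e,f) with rfl | hne2
      · exact Finset.mem_insert_self _ _
      rw [W, Finset.mem_filter] at hq
      obtain ⟨hqR, hcq, hqd, hqne⟩ := hq
      apply Finset.mem_insert_of_mem
      have h1 := hnc (e,f) hp0R q hqR
      have h2 := hnc q hqR (e,f) hp0R
      have h3 := hmax q (by rw [W, Finset.mem_filter]; exact ⟨hqR, hcq, hqd, hqne⟩)
      have hq2 := hlen q hqR
      simp only [not_and, not_lt] at h1 h2
      have hcase : q.2 ≤ e ∨ f ≤ q.1 ∨ (e ≤ q.1 ∧ q.2 ≤ f) := by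
        by_contra hcon
        push_neg at hcon
        obtain ⟨u1, u2, u3⟩ := hcon
        rcases Nat.lt_or_ge q.1 e with hA | hA
        · have := h2 hA
          omega
        · rcases Nat.eq_or_lt_of_le hA with hB | hB
          · -- q.1 = e
            have : q.2 ≤ f := by
              have hq21 : q.2 - q.1 ≤ f - e := by simpa using h3
              omega
            have := u3 hA
            omega
          · have := h1 hB
            omega
      simp only [W, Wf, Finset.mem_union, Finset.mem_filter]
      rcases hcase with h | h | h
      · exact Or.inl (Or.inr ⟨hqR, hcq, h⟩)
      · exact Or.inr ⟨hqR, h, hqd⟩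
      · exact Or.inl (Or.inl ⟨hqR, h.1, h.2, hne2⟩)
    have c1 : (W R e f).card ≤ f - e - 2 := IH (f-e) (by omega) e f le_rfl
    have c2 : (Wf R c e).card ≤ e - c - 1 := hWf c e (by omega)
    have c3 : (Wf R f d).card ≤ d - f - 1 := hWf f d (by omega)
    calc (W R c d).card ≤ _ := Finset.card_le_card hsub
      _ ≤ ((W R e f) ∪ (Wf R c e) ∪ (Wf R f d)).card + 1 := Finset.card_insert_le _ _
      _ ≤ ((W R e f).card + (Wf R c e).card + (Wf R f d).card) + 1 := by
          have := Finset.card_union_le ((W R e f) ∪ (Wf R c e)) (Wf R f d)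
          have := Finset.card_union_le (W R e f) (Wf R c e)
          omega
      _ ≤ d - c - 2 := by omega

lemma crosses_irrefl (e : Sym2 (Fin n)) : ¬ Crosses e e := by
  rintro ⟨a, b, c, d, h1, h2, h3, h4, h5⟩
  rw [h1, Sym2.eq_iff] at h2
  rcases h2 with ⟨rfl, rfl⟩ | ⟨rfl, rfl⟩
  · exact absurd h3 (lt_irrefl _)
  · exact absurd h4 (lt_irrefl _)

lemma famBound (F : Set (Sym2 (Fin n)))
    (hchord : ∀ e ∈ F, ∃ a b : Fin n, e = s(a,b) ∧ a.val + 2 ≤ b.val ∧ ¬(a.val = 0 ∧ b.val = n-1))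
    (hnc : ∀ e ∈ F, ∀ f ∈ F, ¬ Crosses e f) : F.ncard ≤ n - 3 := by
  have hfin : F.Finite := Set.toFinite F
  set Ft := hfin.toFinset with hFt
  have hmemFt : ∀ e, e ∈ Ft ↔ e ∈ F := fun e => hfin.mem_toFinset
  set g : Sym2 (Fin n) → ℕ × ℕ := fun e => ((Sym2.inf e).val, (Sym2.sup e).val) with hg
  have hge : ∀ e ∈ F, ∀ a b : Fin n, e = s(a,b) → a.val < b.val → g e = (a.val, b.val) := by
    intro e he a b hab hlt
    have h1 : a ⊓ b = a := inf_eq_left.2 (le_of_lt (Fin.lt_def.2 hlt))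
    have h2 : a ⊔ b = b := sup_eq_right.2 (le_of_lt (Fin.lt_def.2 hlt))
    rw [hg]; simp only [hab, Sym2.inf_mk, Sym2.sup_mk, h1, h2]
  set R := Ft.image g with hR
  have hcard : R.card = F.ncard := by
    rw [hR, Finset.card_image_of_injOn]
    · rw [hFt, Set.ncard_eq_toFinset_card F hfin]
    · intro e he f hf hef
      rw [Finset.mem_coe, hmemFt] at he hf
      obtain ⟨a, b, rfl, hab, -⟩ := hchord e he
      obtain ⟨c, d, rfl, hcd, -⟩ := hchord f hf
      rw [hge _ he a b rfl (by omega), hge _ hf c d rfl (by omega)] at hef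
      simp only [Prod.mk.injEq] at hef
      rw [Sym2.eq_iff]
      left
      exact ⟨Fin.ext hef.1, Fin.ext hef.2⟩
  have hRspec : ∀ p ∈ R, ∃ e ∈ F, ∃ a b : Fin n, e = s(a,b) ∧ a.val + 2 ≤ b.val ∧
      ¬(a.val = 0 ∧ b.val = n-1) ∧ p = (a.val, b.val) := by
    intro p hp
    rw [hR, Finset.mem_image] at hp
    obtain ⟨e, he, rfl⟩ := hp
    rw [hmemFt] at he
    obtain ⟨a, b, rfl, hab, hw⟩ := hchord e he
    exact ⟨_, he, a, b, rfl, hab, hw, hge _ he a b rfl (by omega)⟩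
  have hlen : ∀ p ∈ R, p.1 + 2 ≤ p.2 := by
    intro p hp; obtain ⟨e, -, a, b, -, hab, -, rfl⟩ := hRspec p hp; exact hab
  have hncR : ∀ p ∈ R, ∀ q ∈ R, ¬(p.1 < q.1 ∧ q.1 < p.2 ∧ p.2 < q.2) := by
    rintro p hp q hq ⟨u1, u2, u3⟩
    obtain ⟨e, he, a, b, rfl, hab, -, rfl⟩ := hRspec p hp
    obtain ⟨f, hf, c, d, rfl, hcd, -, rfl⟩ := hRspec q hq
    exact hnc _ he _ hf ⟨a, b, c, d, rfl, rfl, Fin.lt_def.2 u1, Fin.lt_def.2 u2, Fin.lt_def.2 u3⟩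
  have hsubW : R ⊆ PT.W R 0 (n-1) := by
    intro p hp
    obtain ⟨e, -, a, b, -, hab, hw, rfl⟩ := hRspec p hp
    have := b.isLt
    rw [PT.W, Finset.mem_filter]
    refine ⟨hp, by omega, by omega, ?_⟩
    simp only [Prod.mk.injEq, ne_eq, not_and]
    intro h1 h2; exact absurd ⟨h1, h2⟩ hw
  have := PT.natBound R hlen hncR (n-1) 0 (n-1) (by omega)
  have hWcard := Finset.card_le_card hsubW
  omega

lemma max_insert (hn : 3 ≤ n) {a b : Fin n} (h2 : a.val + 2 ≤ b.val)
    (hw : ¬(a.val = 0 ∧ b.val = n-1))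
    (hnc : ∀ c d : Fin n, c < d → s(c,d) ∈ T.diag →
      ¬ Crosses s(a,b) s(c,d) ∧ ¬ Crosses s(c,d) s(a,b)) : s(a,b) ∈ T.diag := by
  by_contra hmem
  have hb := b.isLt
  set F : Set (Sym2 (Fin n)) := insert s(a,b) T.diag with hF
  have hrep : ∀ e ∈ F, ∃ c d : Fin n, e = s(c,d) ∧ c.val + 2 ≤ d.val ∧ ¬(c.val = 0 ∧ d.val = n-1) := by
    intro e he
    rcases he with rfl | he
    · exact ⟨a, b, rfl, h2, hw⟩
    · exact diag_rep T he
  have hcross : ∀ e ∈ F, ∀ f ∈ F, ¬ Crosses e f := by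
    intro e he f hf
    rcases he with rfl | he <;> rcases hf with rfl | hf
    · exact crosses_irrefl _
    · obtain ⟨c, d, rfl, hcd2, -⟩ := diag_rep T hf
      exact (hnc c d (Fin.lt_def.2 (by omega)) hf).1
    · obtain ⟨c, d, rfl, hcd2, -⟩ := diag_rep T he
      exact (hnc c d (Fin.lt_def.2 (by omega)) he).2
    · exact T.noncross _ he _ hf
  have hbound := famBound F hrep hcross
  have hcardF : F.ncard = n - 2 := by
    rw [hF, Set.ncard_insert_of_notMem hmem (Set.toFinite _), T.card_diag]
    omega
  omega

lemma apex_in (hn : 3 ≤ n) {a b : Fin n} (h2 : a.val + 2 ≤ b.val) (hfree : Free T a b) :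
    ∃ x : Fin n, a < x ∧ x < b ∧ Free T a x ∧ Free T x b := by
  classical
  have hb := b.isLt
  have hnc : ∀ c d : Fin n, c < d → s(c,d) ∈ T.diag →
      ¬ Crosses s(a,b) s(c,d) ∧ ¬ Crosses s(c,d) s(a,b) := fun c d hcd hm => free_nocross T hfree hcd hm
  set X : Finset (Fin n) := Finset.univ.filter (fun c => a < c ∧ c < b ∧ T.Adj a c) with hX
  have hne : X.Nonempty := by
    refine ⟨⟨a.val + 1, by omega⟩, ?_⟩
    rw [hX, Finset.mem_filter]
    refine ⟨Finset.mem_univ _, Fin.lt_def.2 (by simp), Fin.lt_def.2 (by simp; omega), ?_⟩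
    refine ⟨fun h => by simpa using Fin.val_eq_of_eq h, Or.inl ?_⟩
    simp [Nat.mod_eq_of_lt (show a.val + 1 < n by omega)]
  obtain ⟨x, hxX, hmax⟩ := Finset.exists_max_image X (fun c => c.val) hne
  rw [hX, Finset.mem_filter] at hxX
  obtain ⟨-, hax, hxb, hadj⟩ := hxX
  have hax' := Fin.lt_def.1 hax
  have hxb' := Fin.lt_def.1 hxb
  have hfax : Free T a x := free_is_adj_or_diag T hn hax hadj
  refine ⟨x, hax, hxb, hfax, ?_⟩
  rcases Nat.eq_or_lt_of_le (Nat.succ_le_of_lt hxb') with h1 | h1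
  · exact ⟨hxb, Or.inl h1.symm⟩
  · have hxb2 : x.val + 2 ≤ b.val := by omega
    refine ⟨hxb, Or.inr (Or.inr ?_)⟩
    apply max_insert T hn hxb2 (by omega)
    intro c d hcd hm
    have hcd' := Fin.lt_def.1 hcd
    constructor
    · rw [crosses_iff hxb hcd]
      rintro ⟨u1, u2, u3⟩
      exact (hnc c d hcd hm).1 ((crosses_iff (Fin.lt_def.2 (by omega)) hcd).2 ⟨hax.trans u1, u2, u3⟩)
    · rw [crosses_iff hcd hxb]
      rintro ⟨u1, u2, u3⟩
      have hu1 := Fin.lt_def.1 u1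
      have hu2 := Fin.lt_def.1 u2
      have hu3 := Fin.lt_def.1 u3
      rcases lt_trichotomy c.val a.val with hc | hc | hc
      · exact (hnc c d hcd hm).2 ((crosses_iff hcd (Fin.lt_def.2 (by omega))).2
          ⟨Fin.lt_def.2 hc, Fin.lt_def.2 (by omega), Fin.lt_def.2 (by omega)⟩)
      · -- c = a : d is a better element of X
        have hcda : c = a := Fin.ext hc
        subst hcda
        have hdX : d ∈ X := by
          rw [hX, Finset.mem_filter]
          refine ⟨Finset.mem_univ _, Fin.lt_def.2 (by omega), Fin.lt_def.2 (by omega),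
            ⟨fun h => ?_, Or.inr (Or.inr hm)⟩⟩
          rw [h] at hax'
          omega
        have := hmax d hdX
        omega
      · -- a < c : crosses (a,x)
        rcases hfax.2 with hu | ⟨hu, hv⟩ | hu
        · omega
        · omega
        · exact T.noncross _ hu _ hm ((crosses_iff hax hcd).2
            ⟨Fin.lt_def.2 hc, Fin.lt_def.2 (by omega), Fin.lt_def.2 (by omega)⟩)

lemma rep_unique {a b c d : Fin n} (hab : a < b) (hcd : c < d) (h : s(a,b) = s(c,d)) :
    a = c ∧ b = d := by
  rcases Sym2.eq_iff.1 h with ⟨rfl, rfl⟩ | ⟨rfl, rfl⟩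
  · exact ⟨rfl, rfl⟩
  · exact absurd hab (lt_asymm hcd)

lemma unit_not_diag {a b : Fin n} (hab : a < b) (h : b.val ≤ a.val + 1) : s(a,b) ∉ T.diag := by
  intro hmem
  obtain ⟨c, d, he, hlen, -⟩ := diag_rep T hmem
  have hab' := Fin.lt_def.1 hab
  rcases Sym2.eq_iff.1 he with ⟨rfl, rfl⟩ | ⟨rfl, rfl⟩ <;> omega

/-- Diagonals strictly inside the region `[a,b]`. -/
def Dg (a b : Fin n) : Set (Sym2 (Fin n)) :=
  {e | e ∈ T.diag ∧ ∃ c d : Fin n, e = s(c,d) ∧ c < d ∧ a ≤ c ∧ d ≤ b ∧ ¬(c = a ∧ d = b)}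

lemma Dg_sub {a b : Fin n} : Dg T a b ⊆ T.diag := fun _ h => h.1

lemma Dg_fin {a b : Fin n} : (Dg T a b).Finite := Set.toFinite _

lemma Dg_empty {a b : Fin n} (h : b.val ≤ a.val + 2) : Dg T a b = ∅ := by
  ext e
  simp only [Dg, Set.mem_setOf_eq, Set.mem_empty_iff_false, iff_false, not_and]
  rintro hmem ⟨c, d, rfl, hcd, hac, hdb, hne⟩
  obtain ⟨c', d', he, hlen, -⟩ := diag_rep T hmem
  obtain ⟨rfl, rfl⟩ := rep_unique hcd (Fin.lt_def.2 (by omega)) he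
  have := Fin.lt_def.1 hcd
  have h1 := Fin.le_def.1 hac
  have h2 := Fin.le_def.1 hdb
  exact hne (Fin.ext (by omega)) (Fin.ext (by omega))

lemma mem_Dg {a b c d : Fin n} (hm : s(c,d) ∈ T.diag) (hcd : c < d) (hac : a ≤ c)
    (hdb : d ≤ b) (hne : ¬(c = a ∧ d = b)) : s(c,d) ∈ Dg T a b :=
  ⟨hm, c, d, rfl, hcd, hac, hdb, hne⟩

lemma Dg_mono {a b a' b' : Fin n} (ha : a' ≤ a) (hb : b ≤ b') (hne : ¬(a' = a ∧ b' = b)) :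
    Dg T a b ⊆ Dg T a' b' := by
  rintro e ⟨hmem, c, d, rfl, hcd, hac, hdb, hne2⟩
  refine ⟨hmem, c, d, rfl, hcd, le_trans ha hac, le_trans hdb hb, ?_⟩
  rintro ⟨rfl, rfl⟩
  exact hne ⟨le_antisymm ha hac, le_antisymm hdb hb⟩

/-- a diagonal of the full polygon is in the top region. -/
lemma mem_Dg_top (hn : 3 ≤ n) {e : Sym2 (Fin n)} (he : e ∈ T.diag) :
    e ∈ Dg T ⟨0, by omega⟩ ⟨n-1, by omega⟩ := by
  obtain ⟨a, b, rfl, hlen, hw⟩ := diag_rep T he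
  have hb := b.isLt
  refine mem_Dg T he (Fin.lt_def.2 (by omega)) (Fin.le_def.2 (Nat.zero_le _))
    (Fin.le_def.2 (by show b.val ≤ n - 1; omega)) ?_
  rintro ⟨h1, h2⟩
  apply hw
  constructor
  · rw [h1]
  · rw [h2]

lemma Dg_top_eq (hn : 3 ≤ n) : Dg T ⟨0, by omega⟩ ⟨n-1, by omega⟩ = T.diag :=
  Set.Subset.antisymm (Dg_sub T) (fun _ he => mem_Dg_top T hn he)

/-- The decomposition of a region at an apex. -/
lemma Dg_decomp (hn : 3 ≤ n) {a x b : Fin n} (hax : a < x) (hxb : x < b)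
    (hfab : Free T a b) (hfax : Free T a x) (hfxb : Free T x b) :
    Dg T a b = (Dg T a x ∪ Dg T x b) ∪ ({s(a,x)} ∩ T.diag ∪ {s(x,b)} ∩ T.diag) := by
  have hb := b.isLt
  have hax' := Fin.lt_def.1 hax
  have hxb' := Fin.lt_def.1 hxb
  ext e
  constructor
  · rintro ⟨hmem, c, d, rfl, hcd, hac, hdb, hne⟩
    have hcd' := Fin.lt_def.1 hcd
    have hac' := Fin.le_def.1 hac
    have hdb' := Fin.le_def.1 hdb
    have hspan : ¬ (c < x ∧ x < d) := by
      rintro ⟨u1, u2⟩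
      have hu1 := Fin.lt_def.1 u1
      have hu2 := Fin.lt_def.1 u2
      rcases Nat.eq_or_lt_of_le hac' with hc | hc
      · -- c = a
        have : c = a := Fin.ext hc.symm
        subst this
        rcases Nat.eq_or_lt_of_le hdb' with hd | hd
        · exact hne ⟨rfl, Fin.ext hd⟩
        · -- a < x < d < b : e crosses (x,b)
          exact (free_nocross T hfxb hcd hmem).2 ((crosses_iff hcd hxb).2
            ⟨u1, u2, Fin.lt_def.2 hd⟩)
      · -- a < c : e crosses (a,x)
        exact (free_nocross T hfax hcd hmem).1 ((crosses_iff hax hcd).2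
          ⟨Fin.lt_def.2 hc, u1, u2⟩)
    rcases Nat.lt_or_ge c.val x.val with h1 | h1
    · -- d ≤ x
      have hdx : d.val ≤ x.val := by
        by_contra h
        exact hspan ⟨Fin.lt_def.2 h1, Fin.lt_def.2 (by omega)⟩
      rcases eq_or_ne (c, d) (a, x) with heq | hne2
      · rw [Prod.mk.injEq] at heq
        rw [heq.1, heq.2]
        exact Or.inr (Or.inl ⟨rfl, heq.1 ▸ heq.2 ▸ hmem⟩)
      · refine Or.inl (Or.inl ⟨hmem, c, d, rfl, hcd, hac, Fin.le_def.2 hdx, ?_⟩)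
        rintro ⟨rfl, rfl⟩
        exact hne2 rfl
    · -- x ≤ c
      rcases eq_or_ne (c, d) (x, b) with heq | hne2
      · rw [Prod.mk.injEq] at heq
        rw [heq.1, heq.2]
        exact Or.inr (Or.inr ⟨rfl, heq.1 ▸ heq.2 ▸ hmem⟩)
      · refine Or.inl (Or.inr ⟨hmem, c, d, rfl, hcd, Fin.le_def.2 h1, hdb, ?_⟩)
        rintro ⟨rfl, rfl⟩
        exact hne2 rfl
  · rintro ((h | h) | (h | h))
    · exact Dg_mono T le_rfl (le_of_lt hxb) (by rintro ⟨-, h⟩; exact absurd h (ne_of_gt hxb)) h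
    · exact Dg_mono T (le_of_lt hax) le_rfl (by rintro ⟨h, -⟩; exact absurd h (ne_of_lt hax)) h
    · obtain ⟨he, hmem⟩ := h
      simp only [Set.mem_singleton_iff] at he
      subst he
      exact mem_Dg T hmem hax le_rfl (le_of_lt hxb) (by rintro ⟨-, h⟩; exact absurd h (ne_of_lt hxb))
    · obtain ⟨he, hmem⟩ := h
      simp only [Set.mem_singleton_iff] at he
      subst he
      exact mem_Dg T hmem hxb (le_of_lt hax) le_rfl (by rintro ⟨h, -⟩; exact absurd h (ne_of_gt hax))

/-- helper: a diagonal crossing a free edge is impossible; named form -/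
lemma no_cross_free {a b c d : Fin n} (hfree : Free T a b) (hcd : c < d)
    (hm : s(c,d) ∈ T.diag) (h : a < c ∧ c < b ∧ b < d) : False :=
  (free_nocross T hfree hcd hm).1 ((crosses_iff hfree.1 hcd).2 h)

lemma no_cross_free' {a b c d : Fin n} (hfree : Free T a b) (hcd : c < d)
    (hm : s(c,d) ∈ T.diag) (h : c < a ∧ a < d ∧ d < b) : False :=
  (free_nocross T hfree hcd hm).2 ((crosses_iff hcd hfree.1).2 h)

/-- at most one common neighbour inside a chord -/
lemma cn_in_unique (hn : 3 ≤ n) {a b z1 z2 : Fin n} (h1 : a < z1) (h2 : z1 < z2) (h3 : z2 < b)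
    (ha2 : T.Adj a z2) (hz1b : T.Adj z1 b) : False := by
  have hb := b.isLt
  have v1 := Fin.lt_def.1 h1; have v2 := Fin.lt_def.1 h2; have v3 := Fin.lt_def.1 h3
  rcases (adj_iff_of_lt T hn (h1.trans h2)).1 ha2 with h | ⟨-, h⟩ | h
  · omega
  · omega
  rcases (adj_iff_of_lt T hn (h2.trans h3)).1 hz1b with h' | ⟨h', -⟩ | h'
  · omega
  · omega
  exact T.noncross _ h _ h' ((crosses_iff (h1.trans h2) (h2.trans h3)).2 ⟨h1, h2, h3⟩)

/-- at most one common neighbour outside a chord -/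
lemma cn_out_unique (hn : 3 ≤ n) {a b z1 z2 : Fin n} (hab : a < b) (h12 : z1 < z2)
    (ho1 : z1 < a ∨ b < z1) (ho2 : z2 < a ∨ b < z2)
    (h1a : T.Adj z1 a) (h1b : T.Adj z1 b) (h2a : T.Adj z2 a) (h2b : T.Adj z2 b) : False := by
  have hb := b.isLt
  have vab := Fin.lt_def.1 hab; have v12 := Fin.lt_def.1 h12
  rcases ho2 with ho2 | ho2
  · -- z1 < z2 < a < b : cross s(z1,a) s(z2,b)
    have hz1a : z1 < a := h12.trans ho2
    have v2a := Fin.lt_def.1 ho2; have v1a := Fin.lt_def.1 hz1a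
    rcases (adj_iff_of_lt T hn hz1a).1 h1a with h | ⟨-, h⟩ | h
    · omega
    · omega
    rcases (adj_iff_of_lt T hn (ho2.trans hab)).1 h2b with h' | ⟨h', -⟩ | h'
    · omega
    · omega
    exact T.noncross _ h _ h' ((crosses_iff hz1a (ho2.trans hab)).2 ⟨h12, ho2, hab⟩)
  · rcases ho1 with ho1 | ho1
    · -- z1 < a < b < z2 : cross s(z1,b) s(a,z2)
      have v1a := Fin.lt_def.1 ho1; have vb2 := Fin.lt_def.1 ho2
      have hz2 := z2.isLt
      rcases (adj_iff_of_lt T hn (ho1.trans hab)).1 h1b with h | ⟨h', h''⟩ | h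
      · omega
      · omega
      rcases (adj_iff_of_lt T hn (hab.trans ho2)).1 (adj_symm T h2a) with h' | ⟨h', h''⟩ | h'
      · omega
      · omega
      exact T.noncross _ h _ h' ((crosses_iff (ho1.trans hab) (hab.trans ho2)).2 ⟨ho1, hab, ho2⟩)
    · -- a < b < z1 < z2 : cross s(a,z1) s(b,z2)
      have vb1 := Fin.lt_def.1 ho1; have vb2 := Fin.lt_def.1 ho2
      have hz2 := z2.isLt
      rcases (adj_iff_of_lt T hn (hab.trans ho1)).1 (adj_symm T h1a) with h | ⟨h', h''⟩ | h
      · omega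
      · omega
      rcases (adj_iff_of_lt T hn ho2).1 (adj_symm T h2b) with h' | ⟨h', h''⟩ | h'
      · omega
      · omega
      exact T.noncross _ h _ h' ((crosses_iff (hab.trans ho1) ho2).2 ⟨hab, ho1, h12⟩)

/-- any common neighbour of a region diagonal lies in the region -/
lemma cn_in_region (hn : 3 ≤ n) {a b c d z : Fin n} (hfree : Free T a b) (hcd : c < d)
    (hac : a ≤ c) (hdb : d ≤ b) (hnefull : ¬(c = a ∧ d = b))
    (hzc : T.Adj z c) (hzd : T.Adj z d) : a ≤ z ∧ z ≤ b := by
  have hb := b.isLt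
  have vab := Fin.lt_def.1 hfree.1
  have vcd := Fin.lt_def.1 hcd
  have vac := Fin.le_def.1 hac
  have vdb := Fin.le_def.1 hdb
  by_contra hcon
  have hz : z < a ∨ b < z := by
    rcases Nat.lt_or_ge z.val a.val with h | h
    · exact Or.inl (Fin.lt_def.2 h)
    · rcases Nat.lt_or_ge b.val z.val with h' | h'
      · exact Or.inr (Fin.lt_def.2 h')
      · exact absurd ⟨Fin.le_def.2 h, Fin.le_def.2 h'⟩ hcon
  rcases hz with hz | hz
  · -- z < a
    have vza := Fin.lt_def.1 hz
    rcases Nat.lt_or_ge d.val b.val with hd | hd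
    · -- d < b : edge (z,d) crosses (a,b)
      rcases (adj_iff_of_lt T hn (Fin.lt_def.2 (by omega) : z < d)).1 hzd with h | ⟨h', h''⟩ | h
      · omega
      · omega
      · exact no_cross_free' T hfree (Fin.lt_def.2 (by omega)) h ⟨hz, Fin.lt_def.2 (by omega), Fin.lt_def.2 (by omega)⟩
    · -- d = b, so c > a
      have hdb2 : d = b := Fin.ext (by omega)
      have hca : a.val < c.val := by
        rcases Nat.eq_or_lt_of_le vac with h | h
        · exact absurd ⟨Fin.ext h.symm, hdb2⟩ hnefull
        · exact h
      rcases (adj_iff_of_lt T hn (Fin.lt_def.2 (by omega) : z < c)).1 hzc with h | ⟨h', h''⟩ | h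
      · omega
      · omega
      · exact no_cross_free' T hfree (Fin.lt_def.2 (by omega)) h ⟨hz, Fin.lt_def.2 (by omega), Fin.lt_def.2 (by omega)⟩
  · -- b < z
    have vbz := Fin.lt_def.1 hz
    rcases Nat.lt_or_ge a.val c.val with hc | hc
    · -- a < c : edge (c,z) crosses (a,b)
      rcases (adj_iff_of_lt T hn (Fin.lt_def.2 (by omega) : c < z)).1 (adj_symm T hzc) with h | ⟨h', h''⟩ | h
      · omega
      · omega
      · exact no_cross_free T hfree (Fin.lt_def.2 (by omega)) h ⟨Fin.lt_def.2 (by omega), Fin.lt_def.2 (by omega), hz⟩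
    · -- c = a, so d < b
      have hca2 : c = a := Fin.ext (by omega)
      have hdb3 : d.val < b.val := by
        rcases Nat.eq_or_lt_of_le vdb with h | h
        · exact absurd ⟨hca2, Fin.ext h⟩ hnefull
        · exact h
      rcases (adj_iff_of_lt T hn (Fin.lt_def.2 (by omega) : d < z)).1 (adj_symm T hzd) with h | ⟨h', h''⟩ | h
      · omega
      · omega
      · exact no_cross_free T hfree (Fin.lt_def.2 (by omega)) h ⟨Fin.lt_def.2 (by omega), Fin.lt_def.2 (by omega), hz⟩

/-- every diagonal of a free region has an apex on its outside, within the region -/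
lemma apex_out_region (hn : 3 ≤ n) :
    ∀ k : ℕ, ∀ a b : Fin n, b.val - a.val ≤ k → Free T a b →
    ∀ c d : Fin n, c < d → s(c,d) ∈ Dg T a b →
    ∃ y : Fin n, a ≤ y ∧ y ≤ b ∧ (y < c ∨ d < y) ∧ T.Adj y c ∧ T.Adj y d := by
  intro k
  induction k with
  | zero =>
    intro a b hk hfree c d hcd hmem
    exfalso
    rw [Dg_empty T (by omega)] at hmem
    exact hmem
  | succ k IH =>
    intro a b hk hfree c d hcd hmem
    have hwidth : a.val + 3 ≤ b.val := by
      by_contra h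
      rw [Dg_empty T (by omega)] at hmem
      exact hmem
    have hb := b.isLt
    obtain ⟨x, hax, hxb, hfax, hfxb⟩ := apex_in T hn (by omega) hfree
    have vax := Fin.lt_def.1 hax
    have vxb := Fin.lt_def.1 hxb
    have hdec := Dg_decomp T hn hax hxb hfree hfax hfxb
    rw [hdec] at hmem
    rcases hmem with (hmem | hmem) | (hmem | hmem)
    · obtain ⟨y, h1, h2, h3, h4, h5⟩ := IH a x (by omega) hfax c d hcd hmem
      exact ⟨y, h1, le_trans h2 (le_of_lt hxb), h3, h4, h5⟩
    · obtain ⟨y, h1, h2, h3, h4, h5⟩ := IH x b (by omega) hfxb c d hcd hmem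
      exact ⟨y, le_trans (le_of_lt hax) h1, h2, h3, h4, h5⟩
    · obtain ⟨heq, -⟩ := hmem
      simp only [Set.mem_singleton_iff] at heq
      obtain ⟨rfl, rfl⟩ := rep_unique hcd hax heq
      exact ⟨b, le_of_lt (hcd.trans hxb), le_rfl, Or.inr hxb,
        adj_symm T (free_adj T hn hfree), adj_symm T (free_adj T hn hfxb)⟩
    · obtain ⟨heq, -⟩ := hmem
      simp only [Set.mem_singleton_iff] at heq
      obtain ⟨rfl, rfl⟩ := rep_unique hcd hxb heq
      exact ⟨a, le_rfl, le_of_lt (hax.trans hcd), Or.inl hax,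
        free_adj T hn hfax, free_adj T hn hfree⟩

/-- every diagonal has an inside apex -/
lemma apex_in_diag (hn : 3 ≤ n) {a b : Fin n} (hab : a < b) (hmem : s(a,b) ∈ T.diag) :
    ∃ x : Fin n, a < x ∧ x < b ∧ T.Adj x a ∧ T.Adj x b := by
  obtain ⟨c, d, he, hlen, -⟩ := diag_rep T hmem
  obtain ⟨rfl, rfl⟩ := rep_unique hab (Fin.lt_def.2 (by omega)) he
  obtain ⟨x, h1, h2, h3, h4⟩ := apex_in T hn (by omega) ⟨hab, Or.inr (Or.inr hmem)⟩
  exact ⟨x, h1, h2, adj_symm T (free_adj T hn h3), free_adj T hn h4⟩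

/-- every diagonal has an outside apex -/
lemma apex_out_diag (hn : 3 ≤ n) {a b : Fin n} (hab : a < b) (hmem : s(a,b) ∈ T.diag) :
    ∃ y : Fin n, (y < a ∨ b < y) ∧ T.Adj y a ∧ T.Adj y b := by
  have h0n : (0:ℕ) < n := by omega
  obtain ⟨y, -, -, h3, h4, h5⟩ := apex_out_region T hn n ⟨0, h0n⟩ ⟨n-1, by omega⟩ (by simp)
    ⟨Fin.lt_def.2 (by simp; omega), Or.inr (Or.inl ⟨rfl, rfl⟩)⟩ a b hab (mem_Dg_top T hn hmem)
  exact ⟨y, h3, h4, h5⟩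

/-- a triangle: three pairwise adjacent distinct vertices -/
def Tri (u v w : Fin n) : Prop :=
  u ≠ v ∧ u ≠ w ∧ v ≠ w ∧ T.Adj u v ∧ T.Adj u w ∧ T.Adj v w

/-- two edges conflict if they lie on a common triangle -/
def Confl (e f : Sym2 (Fin n)) : Prop :=
  ∃ u v w : Fin n, Tri T u v w ∧ (e = s(u,v) ∨ e = s(u,w) ∨ e = s(v,w)) ∧
    (f = s(u,v) ∨ f = s(u,w) ∨ f = s(v,w))

lemma pair_eq {a b c d : Fin n} (h : s(a,b) = s(c,d)) : (a = c ∧ b = d) ∨ (a = d ∧ b = c) :=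
  Sym2.eq_iff.1 h

lemma confl_dest {e f : Sym2 (Fin n)} (h : Confl T e f) {c d : Fin n} (he : e = s(c,d)) :
    f = e ∨ ∃ w : Fin n, w ≠ c ∧ w ≠ d ∧ T.Adj w c ∧ T.Adj w d ∧ (f = s(w,c) ∨ f = s(w,d)) := by
  obtain ⟨u, v, w, ⟨huv, huw, hvw, auv, auw, avw⟩, heE, hfE⟩ := h
  subst he
  rcases heE with he | he | he
  · rcases pair_eq he.symm with ⟨rfl, rfl⟩ | ⟨rfl, rfl⟩
    · rcases hfE with hf | hf | hf
      · exact Or.inl hf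
      · exact Or.inr ⟨w, Ne.symm huw, Ne.symm hvw, adj_symm T auw, adj_symm T avw,
          Or.inl (hf.trans Sym2.eq_swap)⟩
      · exact Or.inr ⟨w, Ne.symm huw, Ne.symm hvw, adj_symm T auw, adj_symm T avw,
          Or.inr (hf.trans Sym2.eq_swap)⟩
    · rcases hfE with hf | hf | hf
      · exact Or.inl (hf.trans Sym2.eq_swap)
      · exact Or.inr ⟨w, Ne.symm hvw, Ne.symm huw, adj_symm T avw, adj_symm T auw,
          Or.inr (hf.trans Sym2.eq_swap)⟩
      · exact Or.inr ⟨w, Ne.symm hvw, Ne.symm huw, adj_symm T avw, adj_symm T auw,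
          Or.inl (hf.trans Sym2.eq_swap)⟩
  · rcases pair_eq he.symm with ⟨rfl, rfl⟩ | ⟨rfl, rfl⟩
    · rcases hfE with hf | hf | hf
      · exact Or.inr ⟨v, Ne.symm huv, hvw, adj_symm T auv, avw, Or.inl (hf.trans Sym2.eq_swap)⟩
      · exact Or.inl hf
      · exact Or.inr ⟨v, Ne.symm huv, hvw, adj_symm T auv, avw, Or.inr hf⟩
    · rcases hfE with hf | hf | hf
      · exact Or.inr ⟨v, hvw, Ne.symm huv, avw, adj_symm T auv, Or.inr (hf.trans Sym2.eq_swap)⟩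
      · exact Or.inl (hf.trans Sym2.eq_swap)
      · exact Or.inr ⟨v, hvw, Ne.symm huv, avw, adj_symm T auv, Or.inl hf⟩
  · rcases pair_eq he.symm with ⟨rfl, rfl⟩ | ⟨rfl, rfl⟩
    · rcases hfE with hf | hf | hf
      · exact Or.inr ⟨u, huv, huw, auv, auw, Or.inl hf⟩
      · exact Or.inr ⟨u, huv, huw, auv, auw, Or.inr hf⟩
      · exact Or.inl hf
    · rcases hfE with hf | hf | hf
      · exact Or.inr ⟨u, huw, huv, auw, auv, Or.inr hf⟩
      · exact Or.inr ⟨u, huw, huv, auw, auv, Or.inl hf⟩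
      · exact Or.inl (hf.trans Sym2.eq_swap)

/-- helper: an element of `Dg x b` cannot be an edge with both endpoints ≤ x -/
lemma mem_Dg_high {x b p q : Fin n} (hf : s(p,q) ∈ Dg T x b) (hp : p.val ≤ x.val)
    (hq : q.val ≤ x.val) : False := by
  obtain ⟨-, c', d', he, hcd', hxc', hd'b, -⟩ := hf
  have h1 := Fin.le_def.1 hxc'
  have h2 := Fin.lt_def.1 hcd'
  rcases pair_eq he with ⟨h3, h4⟩ | ⟨h3, h4⟩ <;>
    [ (rw [h3] at hp; rw [h4] at hq; omega) ; (rw [h3] at hp; rw [h4] at hq; omega) ]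

lemma mem_Dg_low {a x p q : Fin n} (hf : s(p,q) ∈ Dg T a x) (hp : x.val ≤ p.val)
    (hq : x.val ≤ q.val) : False := by
  obtain ⟨-, c', d', he, hcd', hac', hd'x, -⟩ := hf
  have h1 := Fin.le_def.1 hd'x
  have h2 := Fin.lt_def.1 hcd'
  rcases pair_eq he with ⟨h3, h4⟩ | ⟨h3, h4⟩ <;>
    [ (rw [h3] at hp; rw [h4] at hq; omega) ; (rw [h3] at hp; rw [h4] at hq; omega) ]

/-- no conflict across the split of a region at an apex -/
lemma confl_sep (hn : 3 ≤ n) {a x b : Fin n} (hax : a < x) (hxb : x < b)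
    (hfax : Free T a x) {e f : Sym2 (Fin n)}
    (hee : e ∈ Dg T a x) (hff : f ∈ Dg T x b) : ¬ Confl T e f := by
  intro hconf
  obtain ⟨hediag, c, d, rfl, hcd, hac, hdx, hnef⟩ := hee
  rcases confl_dest T hconf rfl with heq | ⟨w, hwc, hwd, hadjc, hadjd, hfeq⟩
  · -- f = e : e in both regions
    obtain ⟨-, c', d', hfe, hcd', hxc', hd'b, -⟩ := hff
    rw [heq] at hfe
    obtain ⟨rfl, rfl⟩ := rep_unique hcd hcd' hfe
    have := Fin.le_def.1 hdx; have := Fin.le_def.1 hxc'; have := Fin.lt_def.1 hcd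
    omega
  · have hw := cn_in_region T hn hfax hcd hac hdx hnef hadjc hadjd
    have hwv := Fin.le_def.1 hw.2
    have hcv := Fin.le_def.1 hdx
    have := Fin.lt_def.1 hcd
    rcases hfeq with hf | hf
    · rw [hf] at hff; exact mem_Dg_high T hff (by omega) (by omega)
    · rw [hf] at hff; exact mem_Dg_high T hff (by omega) (by omega)

/-- the left top edge s(a,x) does not conflict with diagonals of the right region -/
lemma confl_L (hn : 3 ≤ n) {a x b : Fin n} (hax : a < x) (hxb : x < b)
    (hfab : Free T a b) (hfax : Free T a x) (hfxb : Free T x b)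
    {f : Sym2 (Fin n)} (hff : f ∈ Dg T x b) : ¬ Confl T s(a,x) f := by
  intro hconf
  have vax := Fin.lt_def.1 hax; have vxb := Fin.lt_def.1 hxb
  rcases confl_dest T hconf rfl with heq | ⟨w, hwa, hwx, hadja, hadjx, hfeq⟩
  · rw [heq] at hff; exact mem_Dg_high T hff (by omega) (by omega)
  · rcases hfeq with hf | hf
    · rw [hf] at hff; -- f = s(w,a) : w must be > x, but then edge (a,w)...
      -- rep of f forces a ≥ x, contradiction unless... a < x always: contradiction via rep
      obtain ⟨-, c', d', he, hcd', hxc', hd'b, hne'⟩ := hff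
      have h1 := Fin.le_def.1 hxc'; have h2 := Fin.lt_def.1 hcd'; have h3 := Fin.le_def.1 hd'b
      rcases pair_eq he with ⟨h4, h5⟩ | ⟨h4, h5⟩
      · rw [h4] at *; omega
      · have := Fin.val_eq_of_eq h5; omega
    · rw [hf] at hff
      -- f = s(w,x) with w CN of (a,x); rep forces x < w < b; b is also an outside CN
      obtain ⟨-, c', d', he, hcd', hxc', hd'b, hne'⟩ := hff
      have h1 := Fin.le_def.1 hxc'; have h2 := Fin.lt_def.1 hcd'; have h3 := Fin.le_def.1 hd'b
      have hb := b.isLt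
      rcases pair_eq he with ⟨h4, h5⟩ | ⟨h4, h5⟩
      · -- w = c' ≥ x and x = d' > c' : contradiction
        have := Fin.val_eq_of_eq h4; have := Fin.val_eq_of_eq h5; omega
      · -- w = d', x = c' : x < w ≤ b, w ≠ b
        have hv4 := Fin.val_eq_of_eq h4; have hv5 := Fin.val_eq_of_eq h5
        have hwb : w.val < b.val := by
          rcases Nat.eq_or_lt_of_le (show w.val ≤ b.val by omega) with hh | hh
          · exfalso; exact hne' ⟨Fin.ext (by omega), Fin.ext (by omega)⟩
          · exact hh
        exact cn_out_unique T hn hax (Fin.lt_def.2 hwb)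
          (Or.inr (Fin.lt_def.2 (by omega))) (Or.inr hxb)
          hadja hadjx (adj_symm T (free_adj T hn hfab)) (adj_symm T (free_adj T hn hfxb))

/-- the right top edge s(x,b) does not conflict with diagonals of the left region -/
lemma confl_R (hn : 3 ≤ n) {a x b : Fin n} (hax : a < x) (hxb : x < b)
    (hfab : Free T a b) (hfax : Free T a x) (hfxb : Free T x b)
    {f : Sym2 (Fin n)} (hff : f ∈ Dg T a x) : ¬ Confl T s(x,b) f := by
  intro hconf
  have vax := Fin.lt_def.1 hax; have vxb := Fin.lt_def.1 hxb
  rcases confl_dest T hconf rfl with heq | ⟨w, hwx, hwb, hadjx, hadjb, hfeq⟩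
  · rw [heq] at hff; exact mem_Dg_low T hff le_rfl (by exact Fin.le_def.2 (le_of_lt vxb))
  · rcases hfeq with hf | hf
    · rw [hf] at hff
      -- f = s(w,x) : rep forces w = c with a ≤ w < x, w ≠ a; a is another outside CN of (x,b)
      obtain ⟨-, c', d', he, hcd', hac', hd'x, hne'⟩ := hff
      have h1 := Fin.le_def.1 hac'; have h2 := Fin.lt_def.1 hcd'; have h3 := Fin.le_def.1 hd'x
      rcases pair_eq he with ⟨h4, h5⟩ | ⟨h4, h5⟩
      · -- w = c', x = d' : a ≤ w < x, and w ≠ a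
        have hv4 := Fin.val_eq_of_eq h4; have hv5 := Fin.val_eq_of_eq h5
        have haw : a.val < w.val := by
          rcases Nat.eq_or_lt_of_le (show a.val ≤ w.val by omega) with hh | hh
          · exfalso; exact hne' ⟨Fin.ext (by omega), Fin.ext (by omega)⟩
          · exact hh
        exact cn_out_unique T hn hxb (Fin.lt_def.2 haw)
          (Or.inl hax) (Or.inl (Fin.lt_def.2 (by omega)))
          (free_adj T hn hfax) (free_adj T hn hfab) hadjx hadjb
      · have v4 := Fin.val_eq_of_eq h4; have v5 := Fin.val_eq_of_eq h5; omega
    · rw [hf] at hff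
      -- f = s(w,b) : impossible, b > x ≥ endpoints of Dg a x
      obtain ⟨-, c', d', he, hcd', hac', hd'x, hne'⟩ := hff
      have h2 := Fin.lt_def.1 hcd'; have h3 := Fin.le_def.1 hd'x
      rcases pair_eq he with ⟨h4, h5⟩ | ⟨h4, h5⟩
      · have := Fin.val_eq_of_eq h5; omega
      · have := Fin.val_eq_of_eq h4; omega

lemma confl_symm {e f : Sym2 (Fin n)} (h : Confl T e f) : Confl T f e := by
  obtain ⟨u, v, w, htri, he, hf⟩ := h
  exact ⟨u, v, w, htri, hf, he⟩

/-- if a diagonal of a region conflicts with the region boundary,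
it is one of the two top edges -/
lemma confl_bound (hn : 3 ≤ n) {a x b : Fin n} (hax : a < x) (hxb : x < b)
    (hfab : Free T a b) (hfax : Free T a x) (hfxb : Free T x b)
    (hdiag : s(a,b) ∈ T.diag) {e : Sym2 (Fin n)} (hee : e ∈ Dg T a b)
    (hconf : Confl T e s(a,b)) : e = s(a,x) ∨ e = s(x,b) := by
  have vax := Fin.lt_def.1 hax; have vxb := Fin.lt_def.1 hxb
  have hb := b.isLt
  rcases confl_dest T (confl_symm T hconf) rfl with heq | ⟨w, hwa, hwb, hadja, hadjb, hfeq⟩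
  · -- e = s(a,b) impossible : excluded rep in Dg a b
    exfalso
    obtain ⟨-, c', d', he, hcd', hac', hd'b, hne'⟩ := hee
    rw [heq] at he
    obtain ⟨rfl, rfl⟩ := rep_unique (hax.trans hxb) hcd' he
    exact hne' ⟨rfl, rfl⟩
  · -- w is a CN of (a,b); classify w
    rcases Nat.lt_trichotomy w.val a.val with hw | hw | hw
    · -- w < a : e = s(w,a) or s(w,b), endpoints outside region
      exfalso
      obtain ⟨-, c', d', he, hcd', hac', hd'b, hne'⟩ := hee
      have h1 := Fin.le_def.1 hac'; have h2 := Fin.lt_def.1 hcd'; have h3 := Fin.le_def.1 hd'b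
      rcases hfeq with hf | hf <;> rw [hf] at he <;>
        rcases pair_eq he with ⟨h4, h5⟩ | ⟨h4, h5⟩ <;>
          (have v4 := Fin.val_eq_of_eq h4; have v5 := Fin.val_eq_of_eq h5; omega)
    · -- w = a impossible
      exact absurd (Fin.ext hw) hwa
    · rcases Nat.lt_trichotomy w.val b.val with hw2 | hw2 | hw2
      · -- a < w < b : w is the inside apex, so w = x
        have hwx : w = x := by
          rcases Nat.lt_trichotomy w.val x.val with h | h | h
          · exact absurd (cn_in_unique T hn (Fin.lt_def.2 hw) (Fin.lt_def.2 h) hxb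
              (free_adj T hn hfax) hadjb) (fun p => p)
          · exact Fin.ext h
          · exact absurd (cn_in_unique T hn hax (Fin.lt_def.2 h) (Fin.lt_def.2 hw2)
              (adj_symm T hadja) (free_adj T hn hfxb)) (fun p => p)
        subst hwx
        rcases hfeq with hf | hf
        · exact Or.inl (hf.trans Sym2.eq_swap)
        · exact Or.inr hf
      · exact absurd (Fin.ext hw2) hwb
      · -- w > b : endpoints outside region
        exfalso
        obtain ⟨-, c', d', he, hcd', hac', hd'b, hne'⟩ := hee
        have h1 := Fin.le_def.1 hac'; have h2 := Fin.lt_def.1 hcd'; have h3 := Fin.le_def.1 hd'b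
        rcases hfeq with hf | hf <;> rw [hf] at he <;>
          rcases pair_eq he with ⟨h4, h5⟩ | ⟨h4, h5⟩ <;>
            (have v4 := Fin.val_eq_of_eq h4; have v5 := Fin.val_eq_of_eq h5; omega)

lemma notMem_Dg_self {a b : Fin n} (hab : a < b) : s(a,b) ∉ Dg T a b := by
  rintro ⟨-, c, d, he, hcd, hac, hdb, hne⟩
  obtain ⟨rfl, rfl⟩ := rep_unique hab hcd he
  exact hne ⟨rfl, rfl⟩

lemma Dg_disjoint {a x b : Fin n} {e : Sym2 (Fin n)} (hA : e ∈ Dg T a x) (hB : e ∈ Dg T x b) :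
    False := by
  obtain ⟨-, c, d, rfl, hcd, hac, hdx, -⟩ := hA
  obtain ⟨-, c', d', he, hcd', hxc', hd'b, -⟩ := hB
  obtain ⟨rfl, rfl⟩ := rep_unique hcd hcd' he
  have := Fin.le_def.1 hdx; have := Fin.le_def.1 hxc'; have := Fin.lt_def.1 hcd
  omega

lemma coloring (hn : 3 ≤ n) : ∀ k : ℕ, ∀ a b : Fin n, b.val - a.val ≤ k → Free T a b →
    ∀ c0 : Fin 3,
    ∃ col : Sym2 (Fin n) → Fin 3,
      (∀ e ∈ Dg T a b, ∀ f ∈ Dg T a b, e ≠ f → Confl T e f → col e ≠ col f) ∧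
      (s(a,b) ∈ T.diag → ∀ e ∈ Dg T a b, Confl T e s(a,b) → col e ≠ c0) := by
  intro k
  induction k with
  | zero =>
    intro a b hk hfree c0
    refine ⟨fun _ => c0, ?_, ?_⟩ <;>
      simp [Dg_empty T (show b.val ≤ a.val + 2 by omega)]
  | succ k IH =>
    intro a b hk hfree c0
    by_cases hsm : b.val ≤ a.val + 2
    · refine ⟨fun _ => c0, ?_, ?_⟩ <;> simp [Dg_empty T hsm]
    · obtain ⟨x, hax, hxb, hfax, hfxb⟩ := apex_in T hn (by omega) hfree
      have vax := Fin.lt_def.1 hax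
      have vxb := Fin.lt_def.1 hxb
      have hc0 := c0.isLt
      set c1 : Fin 3 := ⟨(c0.val+1)%3, by omega⟩ with hc1def
      set c2 : Fin 3 := ⟨(c0.val+2)%3, by omega⟩ with hc2def
      have h10 : c1 ≠ c0 := by
        intro h; have := Fin.val_eq_of_eq h; simp [hc1def] at this; omega
      have h20 : c2 ≠ c0 := by
        intro h; have := Fin.val_eq_of_eq h; simp [hc2def] at this; omega
      have h12 : c1 ≠ c2 := by
        intro h; have := Fin.val_eq_of_eq h; simp [hc1def, hc2def] at this; omega
      obtain ⟨colA, hA1, hA2⟩ := IH a x (by omega) hfax c1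
      obtain ⟨colB, hB1, hB2⟩ := IH x b (by omega) hfxb c2
      classical
      set col : Sym2 (Fin n) → Fin 3 := fun e =>
        if e ∈ Dg T a x then colA e else if e ∈ Dg T x b then colB e
        else if e = s(a,x) then c1 else c2 with hcol
      have hLA : s(a,x) ∉ Dg T a x := notMem_Dg_self T hax
      have hLB : s(a,x) ∉ Dg T x b := fun h => mem_Dg_high T h (le_of_lt vax) le_rfl
      have hRA : s(x,b) ∉ Dg T a x := fun h => mem_Dg_low T h le_rfl (le_of_lt vxb)
      have hRB : s(x,b) ∉ Dg T x b := notMem_Dg_self T hxb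
      have hLR : s(a,x) ≠ s(x,b) := by
        intro h
        rcases pair_eq h with ⟨h4, h5⟩ | ⟨h4, h5⟩ <;>
          (have := Fin.val_eq_of_eq h4; have := Fin.val_eq_of_eq h5; omega)
      have hvalA : ∀ e ∈ Dg T a x, col e = colA e := by
        intro e he; simp only [hcol, if_pos he]
      have hvalB : ∀ e ∈ Dg T x b, col e = colB e := by
        intro e he
        simp only [hcol]
        rw [if_neg (fun h => Dg_disjoint T h he), if_pos he]
      have hvalL : col s(a,x) = c1 := by
        simp only [hcol]
        rw [if_neg hLA, if_neg hLB]
        simp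
      have hvalR : col s(x,b) = c2 := by
        simp only [hcol]
        rw [if_neg hRA, if_neg hRB, if_neg (show ¬(s(x,b) = s(a,x)) from fun h => hLR h.symm)]
      have hclass : ∀ e ∈ Dg T a b,
          e ∈ Dg T a x ∨ e ∈ Dg T x b ∨ (e = s(a,x) ∧ s(a,x) ∈ T.diag) ∨
          (e = s(x,b) ∧ s(x,b) ∈ T.diag) := by
        intro e he
        rw [Dg_decomp T hn hax hxb hfree hfax hfxb] at he
        rcases he with (h | h) | (h | h)
        · exact Or.inl h
        · exact Or.inr (Or.inl h)
        · obtain ⟨h1, h2⟩ := h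
          simp only [Set.mem_singleton_iff] at h1
          exact Or.inr (Or.inr (Or.inl ⟨h1, h1 ▸ h2⟩))
        · obtain ⟨h1, h2⟩ := h
          simp only [Set.mem_singleton_iff] at h1
          exact Or.inr (Or.inr (Or.inr ⟨h1, h1 ▸ h2⟩))
      refine ⟨col, ?_, ?_⟩
      · intro e he f hf hne hconf
        rcases hclass e he with heA | heB | ⟨rfl, hLd⟩ | ⟨rfl, hRd⟩ <;>
          rcases hclass f hf with hfA | hfB | ⟨rfl, hLd'⟩ | ⟨rfl, hRd'⟩
        · rw [hvalA e heA, hvalA f hfA]; exact hA1 e heA f hfA hne hconf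
        · exact absurd hconf (confl_sep T hn hax hxb hfax heA hfB)
        · rw [hvalA e heA, hvalL]; exact hA2 hLd' e heA hconf
        · exact absurd (confl_symm T hconf) (confl_R T hn hax hxb hfree hfax hfxb heA)
        · exact absurd (confl_symm T hconf) (confl_sep T hn hax hxb hfax hfA heB)
        · rw [hvalB e heB, hvalB f hfB]; exact hB1 e heB f hfB hne hconf
        · exact absurd (confl_symm T hconf) (confl_L T hn hax hxb hfree hfax hfxb heB)
        · rw [hvalB e heB, hvalR]; exact hB2 hRd' e heB hconf
        · rw [hvalL, hvalA f hfA]; exact Ne.symm (hA2 hLd f hfA (confl_symm T hconf))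
        · exact absurd hconf (confl_L T hn hax hxb hfree hfax hfxb hfB)
        · exact absurd rfl hne
        · rw [hvalL, hvalR]; exact h12
        · exact absurd hconf (confl_R T hn hax hxb hfree hfax hfxb hfA)
        · rw [hvalR, hvalB f hfB]; exact Ne.symm (hB2 hRd f hfB (confl_symm T hconf))
        · rw [hvalR, hvalL]; exact Ne.symm h12
        · exact absurd rfl hne
      · intro hdiag e he hconf
        rcases confl_bound T hn hax hxb hfree hfax hfxb hdiag he hconf with rfl | rfl
        · rw [hvalL]; exact h10
        · rw [hvalR]; exact h20

lemma exists_indep (hn : 3 ≤ n) :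
    ∃ S : Set (Sym2 (Fin n)), S ⊆ T.diag ∧
      (∀ e ∈ S, ∀ f ∈ S, e ≠ f → ¬ Confl T e f) ∧ n - 3 ≤ 3 * S.ncard := by
  have h0n : (0:ℕ) < n := by omega
  have hfree : Free T ⟨0, h0n⟩ ⟨n-1, by omega⟩ :=
    ⟨Fin.lt_def.2 (by simp; omega), Or.inr (Or.inl ⟨rfl, rfl⟩)⟩
  obtain ⟨col, hcol, -⟩ := coloring T hn n ⟨0, h0n⟩ ⟨n-1, by omega⟩ (by simp) hfree 0
  rw [Dg_top_eq T hn] at hcol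
  classical
  set Sc : Fin 3 → Set (Sym2 (Fin n)) := fun i => {e ∈ T.diag | col e = i} with hSc
  have hsub : ∀ i, Sc i ⊆ T.diag := fun i e he => he.1
  have hind : ∀ i, ∀ e ∈ Sc i, ∀ f ∈ Sc i, e ≠ f → ¬ Confl T e f := by
    intro i e he f hf hne hc
    exact hcol e he.1 f hf.1 hne hc (by rw [he.2, hf.2])
  have hcover : T.diag = Sc 0 ∪ Sc 1 ∪ Sc 2 := by
    ext e
    constructor
    · intro he
      have h3 : col e = 0 ∨ col e = 1 ∨ col e = 2 := by
        have h3' := (col e).isLt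
        have : col e = ⟨0, by omega⟩ ∨ col e = ⟨1, by omega⟩ ∨ col e = ⟨2, by omega⟩ := by
          rcases Nat.lt_or_ge (col e).val 1 with h | h
          · exact Or.inl (Fin.ext (show (col e).val = 0 by omega))
          · rcases Nat.lt_or_ge (col e).val 2 with h' | h'
            · exact Or.inr (Or.inl (Fin.ext (show (col e).val = 1 by omega)))
            · exact Or.inr (Or.inr (Fin.ext (show (col e).val = 2 by omega)))
        exact this
      rcases h3 with h | h | h
      · exact Or.inl (Or.inl ⟨he, h⟩)
      · exact Or.inl (Or.inr ⟨he, h⟩)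
      · exact Or.inr ⟨he, h⟩
    · rintro ((h | h) | h) <;> exact h.1
  have hdisj01 : Disjoint (Sc 0) (Sc 1) := by
    rw [Set.disjoint_left]; rintro e ⟨-, h0⟩ ⟨-, h1⟩; rw [h0] at h1; exact absurd h1 (by decide)
  have hdisj2 : Disjoint (Sc 0 ∪ Sc 1) (Sc 2) := by
    rw [Set.disjoint_left]
    rintro e (⟨-, h0⟩ | ⟨-, h0⟩) ⟨-, h1⟩ <;> (rw [h0] at h1; exact absurd h1 (by decide))
  have hsum : (Sc 0).ncard + (Sc 1).ncard + (Sc 2).ncard = n - 3 := by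
    have h1 : (Sc 0 ∪ Sc 1).ncard = (Sc 0).ncard + (Sc 1).ncard :=
      Set.ncard_union_eq hdisj01 (Set.toFinite _) (Set.toFinite _)
    have h2 : ((Sc 0 ∪ Sc 1) ∪ Sc 2).ncard = (Sc 0 ∪ Sc 1).ncard + (Sc 2).ncard :=
      Set.ncard_union_eq hdisj2 (Set.toFinite _) (Set.toFinite _)
    rw [← hcover] at h2
    rw [T.card_diag] at h2
    omega
  have : n - 3 ≤ 3 * (Sc 0).ncard ∨ n - 3 ≤ 3 * (Sc 1).ncard ∨ n - 3 ≤ 3 * (Sc 2).ncard := by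
    omega
  rcases this with h | h | h
  · exact ⟨Sc 0, hsub 0, hind 0, h⟩
  · exact ⟨Sc 1, hsub 1, hind 1, h⟩
  · exact ⟨Sc 2, hsub 2, hind 2, h⟩

/-- Anything crossing the flip target of a diagonal either is the diagonal itself
or crosses one of the four sides of the surrounding quadrilateral. -/
lemma target_cross_class (hn : 3 ≤ n) {a b x y : Fin n}
    (hab : a < b) (hab2 : a.val + 2 ≤ b.val)
    (hax : a < x) (hxb : x < b) (hxa : T.Adj x a) (hxb2 : T.Adj x b)
    (houty : y < a ∨ b < y) (hya : T.Adj y a) (hyb : T.Adj y b)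
    {c d : Fin n} (hcd : c < d)
    (hcross : Crosses s(x,y) s(c,d) ∨ Crosses s(c,d) s(x,y)) :
    (c = a ∧ d = b) ∨ ∃ u v : Fin n, u < v ∧ s(u,v) ∈ T.diag ∧
      (s(u,v) = s(a,x) ∨ s(u,v) = s(x,b) ∨ s(u,v) = s(y,a) ∨ s(u,v) = s(y,b)) ∧
      (Crosses s(u,v) s(c,d) ∨ Crosses s(c,d) s(u,v)) := by
  have hbn := b.isLt; have hdn := d.isLt; have hyn := y.isLt; have hxn := x.isLt
  have vab := Fin.lt_def.1 hab
  have vax := Fin.lt_def.1 hax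
  have vxb := Fin.lt_def.1 hxb
  have vcd := Fin.lt_def.1 hcd
  rcases houty with hyA | hyB
  · -- y < a
    have vya := Fin.lt_def.1 hyA
    have hyx : y < x := Fin.lt_def.2 (by omega)
    rw [show (s(x,y) : Sym2 (Fin n)) = s(y,x) from Sym2.eq_swap] at hcross
    rcases hcross with hc | hc
    · obtain ⟨u1, u2, u3⟩ := (crosses_iff hyx hcd).1 hc
      have w1 := Fin.lt_def.1 u1; have w2 := Fin.lt_def.1 u2; have w3 := Fin.lt_def.1 u3
      rcases Nat.lt_trichotomy c.val a.val with hca | hca | hca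
      · -- y < c < a < d : crosses (y,a)
        rcases (adj_iff_of_lt T hn hyA).1 hya with h | ⟨h1, h2⟩ | h
        · omega
        · omega
        · exact Or.inr ⟨y, a, hyA, h, Or.inr (Or.inr (Or.inl rfl)),
            Or.inl ((crosses_iff hyA hcd).2 ⟨u1, Fin.lt_def.2 hca, Fin.lt_def.2 (by omega)⟩)⟩
      · -- c = a
        rcases Nat.lt_trichotomy d.val b.val with hdb | hdb | hdb
        · -- a < x < d < b : f crosses (x,b)
          rcases (adj_iff_of_lt T hn hxb).1 hxb2 with h | ⟨h1, h2⟩ | h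
          · omega
          · omega
          · exact Or.inr ⟨x, b, hxb, h, Or.inr (Or.inl rfl),
              Or.inr ((crosses_iff hcd hxb).2 ⟨Fin.lt_def.2 (by omega), u3, Fin.lt_def.2 hdb⟩)⟩
        · exact Or.inl ⟨Fin.ext hca, Fin.ext hdb⟩
        · -- d > b : f crosses (y,b)
          have hyb' : y < b := Fin.lt_def.2 (by omega)
          rcases (adj_iff_of_lt T hn hyb').1 hyb with h | ⟨h1, h2⟩ | h
          · omega
          · omega
          · exact Or.inr ⟨y, b, hyb', h, Or.inr (Or.inr (Or.inr rfl)),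
              Or.inl ((crosses_iff hyb' hcd).2 ⟨u1, Fin.lt_def.2 (by omega), Fin.lt_def.2 hdb⟩)⟩
      · -- c > a : crosses (a,x)
        rcases (adj_iff_of_lt T hn hax).1 (adj_symm T hxa) with h | ⟨h1, h2⟩ | h
        · omega
        · omega
        · exact Or.inr ⟨a, x, hax, h, Or.inl rfl,
            Or.inl ((crosses_iff hax hcd).2 ⟨Fin.lt_def.2 hca, u2, u3⟩)⟩
    · obtain ⟨u1, u2, u3⟩ := (crosses_iff hcd hyx).1 hc
      have w1 := Fin.lt_def.1 u1; have w2 := Fin.lt_def.1 u2; have w3 := Fin.lt_def.1 u3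
      rcases Nat.lt_trichotomy d.val a.val with hda | hda | hda
      · -- c < y < d < a : f crosses (y,a)
        rcases (adj_iff_of_lt T hn hyA).1 hya with h | ⟨h1, h2⟩ | h
        · omega
        · omega
        · exact Or.inr ⟨y, a, hyA, h, Or.inr (Or.inr (Or.inl rfl)),
            Or.inr ((crosses_iff hcd hyA).2 ⟨u1, u2, Fin.lt_def.2 hda⟩)⟩
      · -- d = a : f crosses (y,b)
        have hyb' : y < b := Fin.lt_def.2 (by omega)
        rcases (adj_iff_of_lt T hn hyb').1 hyb with h | ⟨h1, h2⟩ | h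
        · omega
        · omega
        · exact Or.inr ⟨y, b, hyb', h, Or.inr (Or.inr (Or.inr rfl)),
            Or.inr ((crosses_iff hcd hyb').2 ⟨u1, u2, Fin.lt_def.2 (by omega)⟩)⟩
      · -- d > a : f crosses (a,x)
        rcases (adj_iff_of_lt T hn hax).1 (adj_symm T hxa) with h | ⟨h1, h2⟩ | h
        · omega
        · omega
        · exact Or.inr ⟨a, x, hax, h, Or.inl rfl,
            Or.inr ((crosses_iff hcd hax).2 ⟨Fin.lt_def.2 (by omega), Fin.lt_def.2 hda, u3⟩)⟩
  · -- b < y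
    have vby := Fin.lt_def.1 hyB
    have hxy : x < y := Fin.lt_def.2 (by omega)
    rcases hcross with hc | hc
    · obtain ⟨u1, u2, u3⟩ := (crosses_iff hxy hcd).1 hc
      have w1 := Fin.lt_def.1 u1; have w2 := Fin.lt_def.1 u2; have w3 := Fin.lt_def.1 u3
      rcases Nat.lt_trichotomy c.val b.val with hcb | hcb | hcb
      · -- x < c < b < d : crosses (x,b)
        rcases (adj_iff_of_lt T hn hxb).1 hxb2 with h | ⟨h1, h2⟩ | h
        · omega
        · omega
        · exact Or.inr ⟨x, b, hxb, h, Or.inr (Or.inl rfl),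
            Or.inl ((crosses_iff hxb hcd).2 ⟨u1, Fin.lt_def.2 hcb, Fin.lt_def.2 (by omega)⟩)⟩
      · -- c = b : crosses (a,y)
        have hay : a < y := Fin.lt_def.2 (by omega)
        rcases (adj_iff_of_lt T hn hay).1 (adj_symm T hya) with h | ⟨h1, h2⟩ | h
        · omega
        · omega
        · exact Or.inr ⟨a, y, hay, h, Or.inr (Or.inr (Or.inl Sym2.eq_swap)),
            Or.inl ((crosses_iff hay hcd).2 ⟨Fin.lt_def.2 (by omega), u2, u3⟩)⟩
      · -- c > b : crosses (b,y)
        rcases (adj_iff_of_lt T hn hyB).1 (adj_symm T hyb) with h | ⟨h1, h2⟩ | h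
        · omega
        · omega
        · exact Or.inr ⟨b, y, hyB, h, Or.inr (Or.inr (Or.inr Sym2.eq_swap)),
            Or.inl ((crosses_iff hyB hcd).2 ⟨Fin.lt_def.2 hcb, u2, u3⟩)⟩
    · obtain ⟨u1, u2, u3⟩ := (crosses_iff hcd hxy).1 hc
      have w1 := Fin.lt_def.1 u1; have w2 := Fin.lt_def.1 u2; have w3 := Fin.lt_def.1 u3
      rcases Nat.lt_trichotomy c.val a.val with hca | hca | hca
      · -- c < a < d < y : f crosses (a,y)
        have hay : a < y := Fin.lt_def.2 (by omega)
        rcases (adj_iff_of_lt T hn hay).1 (adj_symm T hya) with h | ⟨h1, h2⟩ | h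
        · omega
        · omega
        · exact Or.inr ⟨a, y, hay, h, Or.inr (Or.inr (Or.inl Sym2.eq_swap)),
            Or.inr ((crosses_iff hcd hay).2 ⟨Fin.lt_def.2 hca, Fin.lt_def.2 (by omega), u3⟩)⟩
      · -- c = a
        rcases Nat.lt_trichotomy d.val b.val with hdb | hdb | hdb
        · -- a < x < d < b : f crosses (x,b)
          rcases (adj_iff_of_lt T hn hxb).1 hxb2 with h | ⟨h1, h2⟩ | h
          · omega
          · omega
          · exact Or.inr ⟨x, b, hxb, h, Or.inr (Or.inl rfl),
              Or.inr ((crosses_iff hcd hxb).2 ⟨u1, u2, Fin.lt_def.2 hdb⟩)⟩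
        · exact Or.inl ⟨Fin.ext hca, Fin.ext hdb⟩
        · -- d > b : f crosses (b,y)
          rcases (adj_iff_of_lt T hn hyB).1 (adj_symm T hyb) with h | ⟨h1, h2⟩ | h
          · omega
          · omega
          · exact Or.inr ⟨b, y, hyB, h, Or.inr (Or.inr (Or.inr Sym2.eq_swap)),
              Or.inr ((crosses_iff hcd hyB).2 ⟨Fin.lt_def.2 (by omega), Fin.lt_def.2 hdb, u3⟩)⟩
      · -- c > a : crosses (a,x)
        rcases (adj_iff_of_lt T hn hax).1 (adj_symm T hxa) with h | ⟨h1, h2⟩ | h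
        · omega
        · omega
        · exact Or.inr ⟨a, x, hax, h, Or.inl rfl,
            Or.inl ((crosses_iff hax hcd).2 ⟨Fin.lt_def.2 hca, u1, u2⟩)⟩

lemma t_crosses_base {a b x y : Fin n} (hax : a < x) (hxb : x < b) (houty : y < a ∨ b < y) :
    Crosses s(x,y) s(a,b) ∨ Crosses s(a,b) s(x,y) := by
  rcases houty with h | h
  · exact Or.inl ⟨y, x, a, b, Sym2.eq_swap, rfl, h, hax, hxb⟩
  · exact Or.inr ⟨a, b, x, y, rfl, rfl, hax, hxb, h⟩

/-- the flip target crosses no diagonal except its base -/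
lemma target_only (hn : 3 ≤ n) {a b x y : Fin n}
    (hab : a < b) (hab2 : a.val + 2 ≤ b.val)
    (hax : a < x) (hxb : x < b) (hxa : T.Adj x a) (hxb2 : T.Adj x b)
    (houty : y < a ∨ b < y) (hya : T.Adj y a) (hyb : T.Adj y b)
    {c d : Fin n} (hcd : c < d) (hf : s(c,d) ∈ T.diag)
    (hcross : Crosses s(x,y) s(c,d) ∨ Crosses s(c,d) s(x,y)) : c = a ∧ d = b := by
  rcases target_cross_class T hn hab hab2 hax hxb hxa hxb2 houty hya hyb hcd hcross with
    h | ⟨u, v, huv, hdiag, -, hcr⟩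
  · exact h
  · rcases hcr with hcr | hcr
    · exact absurd hcr (T.noncross _ hdiag _ hf)
    · exact absurd hcr (T.noncross _ hf _ hdiag)

lemma target_not_diag (hn : 3 ≤ n) {a b x y : Fin n}
    (hab : a < b) (hmem : s(a,b) ∈ T.diag)
    (hax : a < x) (hxb : x < b) (houty : y < a ∨ b < y) :
    s(x,y) ∉ T.diag := by
  intro hmem2
  rcases t_crosses_base hax hxb houty with h | h
  · exact T.noncross _ hmem2 _ hmem h
  · exact T.noncross _ hmem _ hmem2 h

lemma sees_symm {a b z : Fin n} (h : T.Sees z a b) : T.Sees z b a := by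
  obtain ⟨h1, h2, h3⟩ := h
  refine ⟨h2, h1, ?_⟩
  have : ({z, b, a} : Set (Fin n)) = {z, a, b} := by
    rw [Set.pair_comm b a]
  rw [this]
  exact h3

lemma sees_iff (hn : 3 ≤ n) {a b z : Fin n} (hmem : s(a,b) ∈ T.diag) (hab : a ≠ b) :
    T.Sees z a b ↔ (z ≠ a ∧ z ≠ b ∧ T.Adj z a ∧ T.Adj z b) := by
  constructor
  · rintro ⟨h1, h2, hface⟩
    exact ⟨h1, h2, hface.2 z (by simp) a (by simp) h1, hface.2 z (by simp) b (by simp) h2⟩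
  · rintro ⟨h1, h2, h3, h4⟩
    refine ⟨h1, h2, Set.ncard_eq_three.2 ⟨z, a, b, h1, h2, hab, rfl⟩, ?_⟩
    intro u hu v hv hne
    have hADab : T.Adj a b := ⟨hab, Or.inr (Or.inr hmem)⟩
    simp only [Set.mem_insert_iff, Set.mem_singleton_iff] at hu hv
    rcases hu with rfl | rfl | rfl <;> rcases hv with rfl | rfl | rfl
    · exact absurd rfl hne
    · exact h3
    · exact h4
    · exact adj_symm T h3
    · exact absurd rfl hne
    · exact hADab
    · exact adj_symm T h4
    · exact adj_symm T hADab
    · exact absurd rfl hne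

/-- a common neighbour equals one of the two apexes -/
lemma cn_eq (hn : 3 ≤ n) {a b x y z : Fin n} (hab : a < b) (hmem : s(a,b) ∈ T.diag)
    (hax : a < x) (hxb : x < b) (hxa : T.Adj x a) (hxb2 : T.Adj x b)
    (houty : y < a ∨ b < y) (hya : T.Adj y a) (hyb : T.Adj y b)
    (hza : z ≠ a) (hzb : z ≠ b) (hadja : T.Adj z a) (hadjb : T.Adj z b) :
    z = x ∨ z = y := by
  have vab := Fin.lt_def.1 hab
  have vax := Fin.lt_def.1 hax
  have vxb := Fin.lt_def.1 hxb
  have hzav : z.val ≠ a.val := fun h => hza (Fin.ext h)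
  have hzbv : z.val ≠ b.val := fun h => hzb (Fin.ext h)
  rcases Nat.lt_trichotomy z.val a.val with hz | hz | hz
  · -- z outside (left)
    right
    by_contra hne
    have hnev : z.val ≠ y.val := fun h => hne (Fin.ext h)
    rcases Nat.lt_trichotomy z.val y.val with h | h | h
    · exact cn_out_unique T hn hab (Fin.lt_def.2 h) (Or.inl (Fin.lt_def.2 hz)) houty
        hadja hadjb hya hyb
    · exact hnev h
    · exact cn_out_unique T hn hab (Fin.lt_def.2 h) houty (Or.inl (Fin.lt_def.2 hz))
        hya hyb hadja hadjb
  · exact absurd hz hzav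
  · rcases Nat.lt_trichotomy z.val b.val with hz2 | hz2 | hz2
    · -- inside
      left
      by_contra hne
      have hnev : z.val ≠ x.val := fun h => hne (Fin.ext h)
      rcases Nat.lt_trichotomy z.val x.val with h | h | h
      · exact absurd (cn_in_unique T hn (Fin.lt_def.2 hz) (Fin.lt_def.2 h) hxb
          (adj_symm T hxa) hadjb) id
      · exact hnev h
      · exact absurd (cn_in_unique T hn hax (Fin.lt_def.2 h) (Fin.lt_def.2 hz2)
          (adj_symm T hadja) hxb2) id
    · exact absurd hz2 hzbv
    · -- z outside (right)
      right
      by_contra hne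
      have hnev : z.val ≠ y.val := fun h => hne (Fin.ext h)
      rcases Nat.lt_trichotomy z.val y.val with h | h | h
      · exact cn_out_unique T hn hab (Fin.lt_def.2 h) (Or.inr (Fin.lt_def.2 hz2)) houty
          hadja hadjb hya hyb
      · exact hnev h
      · exact cn_out_unique T hn hab (Fin.lt_def.2 h) houty (Or.inr (Fin.lt_def.2 hz2))
          hya hyb hadja hadjb

lemma target_rep (hn : 3 ≤ n) {a b x y : Fin n}
    (hab : a < b) (hax : a < x) (hxb : x < b) (houty : y < a ∨ b < y) :
    ∃ u v : Fin n, s(x,y) = s(u,v) ∧ u < v ∧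
      v.val ≠ (u.val + 1) % n ∧ u.val ≠ (v.val + 1) % n := by
  have hbn := b.isLt; have hyn := y.isLt; have hxn := x.isLt
  have vab := Fin.lt_def.1 hab
  have vax := Fin.lt_def.1 hax
  have vxb := Fin.lt_def.1 hxb
  rcases houty with h | h
  · have vya := Fin.lt_def.1 h
    refine ⟨y, x, Sym2.eq_swap, Fin.lt_def.2 (by omega), ?_, ?_⟩
    · rw [Nat.mod_eq_of_lt (by omega)]; omega
    · rw [Nat.mod_eq_of_lt (by omega)]; omega
  · have vby := Fin.lt_def.1 h
    refine ⟨x, y, rfl, Fin.lt_def.2 (by omega), ?_, ?_⟩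
    · rw [Nat.mod_eq_of_lt (by omega)]; omega
    · rcases Nat.lt_or_ge (y.val + 1) n with h' | h'
      · rw [Nat.mod_eq_of_lt h']; omega
      · have : (y.val + 1) % n = 0 := by
          have : y.val + 1 = n := by omega
          rw [this, Nat.mod_self]
        omega

lemma fliprel_char (hn : 3 ≤ n) {a b x y : Fin n} (hab : a < b)
    (hmem : s(a,b) ∈ T.diag)
    (hax : a < x) (hxb : x < b) (hxa : T.Adj x a) (hxb2 : T.Adj x b)
    (houty : y < a ∨ b < y) (hya : T.Adj y a) (hyb : T.Adj y b)
    (e' : Sym2 (Fin n)) : T.FlipRel s(a,b) e' ↔ e' = s(x,y) := by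
  have vax := Fin.lt_def.1 hax
  have vxb := Fin.lt_def.1 hxb
  have hxyne : x ≠ y := by
    intro hh
    have := Fin.val_eq_of_eq hh
    rcases houty with h | h <;> (have := Fin.lt_def.1 h; have := Fin.lt_def.1 hab; omega)
  have hyA : y ≠ a := by
    intro hh; have := Fin.val_eq_of_eq hh
    rcases houty with h | h <;> (have := Fin.lt_def.1 h; have := Fin.lt_def.1 hab; omega)
  have hyB : y ≠ b := by
    intro hh; have := Fin.val_eq_of_eq hh
    rcases houty with h | h <;> (have := Fin.lt_def.1 h; have := Fin.lt_def.1 hab; omega)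
  constructor
  · rintro ⟨a', b', x', y', he, rfl, hxy', hsx, hsy⟩
    have hcn : ∀ z, T.Sees z a' b' → (z ≠ a ∧ z ≠ b ∧ T.Adj z a ∧ T.Adj z b) := by
      intro z hz
      rcases pair_eq he with ⟨rfl, rfl⟩ | ⟨rfl, rfl⟩
      · exact (sees_iff T hn hmem hab.ne).1 hz
      · exact (sees_iff T hn hmem hab.ne).1 (sees_symm T hz)
    obtain ⟨hx1, hx2, hx3, hx4⟩ := hcn x' hsx
    obtain ⟨hy1, hy2, hy3, hy4⟩ := hcn y' hsy
    have hex := cn_eq T hn hab hmem hax hxb hxa hxb2 houty hya hyb hx1 hx2 hx3 hx4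
    have hey := cn_eq T hn hab hmem hax hxb hxa hxb2 houty hya hyb hy1 hy2 hy3 hy4
    rcases hex with rfl | rfl <;> rcases hey with rfl | rfl
    · exact absurd rfl hxy'
    · rfl
    · exact Sym2.eq_swap
    · exact absurd rfl hxy'
  · rintro rfl
    refine ⟨a, b, x, y, rfl, rfl, hxyne, ?_, ?_⟩
    · exact (sees_iff T hn hmem hab.ne).2 ⟨ne_of_gt hax, ne_of_lt hxb, hxa, hxb2⟩
    · exact (sees_iff T hn hmem hab.ne).2 ⟨hyA, hyB, hya, hyb⟩

theorem main_result (hn : 3 ≤ n) :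
    ∃ S : Set (Sym2 (Fin n)), T.SimFlippable S ∧
      ((n : ℝ) - 3) / 3 ≤ (S.ncard : ℝ) := by
  classical
  obtain ⟨S, hSsub, hindep, hcount⟩ := exists_indep T hn
  have hdata : ∀ e, e ∈ S → ∃ a b x y : Fin n,
      a < b ∧ a.val + 2 ≤ b.val ∧ e = s(a,b) ∧
      (a < x ∧ x < b ∧ T.Adj x a ∧ T.Adj x b) ∧
      ((y < a ∨ b < y) ∧ T.Adj y a ∧ T.Adj y b) := by
    intro e he
    obtain ⟨a, b, rfl, hlen, hw⟩ := diag_rep T (hSsub he)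
    have hab : a < b := Fin.lt_def.2 (by omega)
    obtain ⟨x, hx1, hx2, hx3, hx4⟩ := apex_in_diag T hn hab (hSsub he)
    obtain ⟨y, hy1, hy2, hy3⟩ := apex_out_diag T hn hab (hSsub he)
    exact ⟨a, b, x, y, hab, hlen, rfl, ⟨hx1, hx2, hx3, hx4⟩, ⟨hy1, hy2, hy3⟩⟩
  choose A B X Y hP using hdata
  set tg : Sym2 (Fin n) → Sym2 (Fin n) :=
    fun e => if h : e ∈ S then s(X e h, Y e h) else e with htg
  have htgval : ∀ e (he : e ∈ S), tg e = s(X e he, Y e he) := by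
    intro e he; simp only [htg, dif_pos he]
  have hfl : ∀ e (he : e ∈ S), ∀ e', T.FlipRel e e' ↔ e' = tg e := by
    intro e he e'
    obtain ⟨hab, hab2, hee, hx, hy⟩ := hP e he
    rw [htgval e he]
    conv_lhs => rw [hee]
    exact fliprel_char T hn hab (hee ▸ hSsub he) hx.1 hx.2.1 hx.2.2.1 hx.2.2.2
      hy.1 hy.2.1 hy.2.2 e'
  have hTargets : {e' | ∃ e ∈ S, T.FlipRel e e'} = tg '' S := by
    ext e'
    simp only [Set.mem_setOf_eq, Set.mem_image]
    constructor
    · rintro ⟨e, he, hf⟩; exact ⟨e, he, ((hfl e he e').1 hf).symm⟩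
    · rintro ⟨e, he, rfl⟩; exact ⟨e, he, (hfl e he (tg e)).2 rfl⟩
  have hnotdiag : ∀ e (he : e ∈ S), tg e ∉ T.diag := by
    intro e he
    obtain ⟨hab, hab2, hee, ⟨hx1, hx2, hx3, hx4⟩, ⟨hy1, hy2, hy3⟩⟩ := hP e he
    rw [htgval e he]
    exact target_not_diag T hn hab (hee ▸ hSsub he) hx1 hx2 hy1
  have honly : ∀ e (he : e ∈ S), ∀ c d : Fin n, c < d → s(c,d) ∈ T.diag →
      (Crosses (tg e) s(c,d) ∨ Crosses s(c,d) (tg e)) → s(c,d) = e := by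
    intro e he c d hcd hf hcr
    obtain ⟨hab, hab2, hee, ⟨hx1, hx2, hx3, hx4⟩, ⟨hy1, hy2, hy3⟩⟩ := hP e he
    rw [htgval e he] at hcr
    obtain ⟨h1, h2⟩ := target_only T hn hab hab2 hx1 hx2 hx3 hx4 hy1 hy2 hy3 hcd hf hcr
    rw [hee, h1, h2]
  have hinj : ∀ e1 ∈ S, ∀ e2 ∈ S, tg e1 = tg e2 → e1 = e2 := by
    intro e1 he1 e2 he2 heq
    obtain ⟨hab, hab2, hee, ⟨hx1, hx2, hx3, hx4⟩, ⟨hy1, hy2, hy3⟩⟩ := hP e1 he1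
    have hbase := t_crosses_base hx1 hx2 hy1
    have h2 : s(A e1 he1, B e1 he1) = e2 := by
      apply honly e2 he2 (A e1 he1) (B e1 he1) hab (hee ▸ hSsub he1)
      rw [← heq, htgval e1 he1]
      exact hbase
    exact hee.trans h2
  set D' : Set (Sym2 (Fin n)) := (T.diag \ S) ∪ {e' | ∃ e ∈ S, T.FlipRel e e'} with hD'
  have hD'2 : D' = (T.diag \ S) ∪ tg '' S := by rw [hD', hTargets]
  have hchord : ∀ e' ∈ D', ∃ u v : Fin n, e' = s(u,v) ∧ u ≠ v ∧
      v.val ≠ (u.val+1)%n ∧ u.val ≠ (v.val+1)%n := by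
    intro e' he'
    rw [hD'2] at he'
    rcases he' with he' | ⟨e, he, rfl⟩
    · exact T.chord e' he'.1
    · obtain ⟨hab, hab2, hee, ⟨hx1, hx2, hx3, hx4⟩, ⟨hy1, hy2, hy3⟩⟩ := hP e he
      obtain ⟨u, v, hrep, huv, h1, h2⟩ := target_rep hn hab hx1 hx2 hy1
      exact ⟨u, v, (htgval e he).trans hrep, huv.ne, h1, h2⟩
  have hnc : ∀ e' ∈ D', ∀ f' ∈ D', ¬ Crosses e' f' := by
    intro e' he' f' hf'
    rw [hD'2] at he' hf'
    rcases he' with he' | ⟨e1, he1, rfl⟩ <;> rcases hf' with hf' | ⟨e2, he2, rfl⟩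
    · exact T.noncross _ he'.1 _ hf'.1
    · intro hcr
      obtain ⟨c, d, hrep, hlen, -⟩ := diag_rep T he'.1
      have hcd : c < d := Fin.lt_def.2 (by omega)
      have hthis := honly e2 he2 c d hcd (hrep ▸ he'.1) (Or.inr (hrep ▸ hcr))
      exact he'.2 (by rw [hrep, hthis]; exact he2)
    · intro hcr
      obtain ⟨c, d, hrep, hlen, -⟩ := diag_rep T hf'.1
      have hcd : c < d := Fin.lt_def.2 (by omega)
      have hthis := honly e1 he1 c d hcd (hrep ▸ hf'.1) (Or.inl (hrep ▸ hcr))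
      exact hf'.2 (by rw [hrep, hthis]; exact he1)
    · rcases eq_or_ne e1 e2 with rfl | hne
      · exact crosses_irrefl _
      · intro hcr
        obtain ⟨hab, hab2, hee, ⟨hx1, hx2, hx3, hx4⟩, ⟨hy1, hy2, hy3⟩⟩ := hP e1 he1
        obtain ⟨hab', hab2', hee', ⟨hx1', hx2', hx3', hx4'⟩, ⟨hy1', hy2', hy3'⟩⟩ := hP e2 he2
        obtain ⟨u2, v2, hrep2, huv2, -, -⟩ := target_rep hn hab' hx1' hx2' hy1'
        rw [htgval e1 he1] at hcr
        rw [htgval e2 he2, hrep2] at hcr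
        rcases target_cross_class T hn hab hab2 hx1 hx2 hx3 hx4 hy1 hy2 hy3 huv2
            (Or.inl hcr) with ⟨h1, h2⟩ | ⟨u, v, huv, hdiag, hwhich, hcr2⟩
        · apply hnotdiag e2 he2
          have : tg e2 = e1 := by rw [htgval e2 he2, hrep2, h1, h2, ← hee]
          rw [this]; exact hSsub he1
        · have he2eq : s(u,v) = e2 := by
            apply honly e2 he2 u v huv hdiag
            rw [htgval e2 he2, hrep2]
            exact hcr2.symm
          apply hindep e1 he1 e2 he2 hne
          have hAdjab : T.Adj (A e1 he1) (B e1 he1) :=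
            ⟨hab.ne, Or.inr (Or.inr (hee ▸ hSsub he1))⟩
          have hy1a : Y e1 he1 ≠ A e1 he1 := by
            intro hh; have := Fin.val_eq_of_eq hh
            rcases hy1 with h | h <;>
              (have := Fin.lt_def.1 h; have := Fin.lt_def.1 hab; omega)
          have hy1b : Y e1 he1 ≠ B e1 he1 := by
            intro hh; have := Fin.val_eq_of_eq hh
            rcases hy1 with h | h <;>
              (have := Fin.lt_def.1 h; have := Fin.lt_def.1 hab; omega)
          rcases hwhich with hw | hw | hw | hw
          · exact ⟨X e1 he1, A e1 he1, B e1 he1,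
              ⟨ne_of_gt hx1, ne_of_lt hx2, hab.ne, hx3, hx4, hAdjab⟩,
              Or.inr (Or.inr hee), Or.inl ((he2eq.symm.trans hw).trans Sym2.eq_swap)⟩
          · exact ⟨X e1 he1, A e1 he1, B e1 he1,
              ⟨ne_of_gt hx1, ne_of_lt hx2, hab.ne, hx3, hx4, hAdjab⟩,
              Or.inr (Or.inr hee), Or.inr (Or.inl (he2eq.symm.trans hw))⟩
          · exact ⟨Y e1 he1, A e1 he1, B e1 he1,
              ⟨hy1a, hy1b, hab.ne, hy2, hy3, hAdjab⟩,
              Or.inr (Or.inr hee), Or.inl (he2eq.symm.trans hw)⟩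
          · exact ⟨Y e1 he1, A e1 he1, B e1 he1,
              ⟨hy1a, hy1b, hab.ne, hy2, hy3, hAdjab⟩,
              Or.inr (Or.inr hee), Or.inr (Or.inl (he2eq.symm.trans hw))⟩
  have himg : (tg '' S).ncard = S.ncard :=
    Set.ncard_image_of_injOn (fun e1 h1 e2 h2 h => hinj e1 h1 e2 h2 h)
  have hdisj : Disjoint (T.diag \ S) (tg '' S) := by
    rw [Set.disjoint_left]
    rintro e' ⟨hd, -⟩ ⟨e, he, rfl⟩
    exact hnotdiag e he hd
  have hcard : D'.ncard = n - 3 := by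
    rw [hD'2, Set.ncard_union_eq hdisj (Set.toFinite _) (Set.toFinite _), himg]
    have hdiff : (T.diag \ S).ncard = (n-3) - S.ncard := by
      rw [Set.ncard_diff hSsub (Set.toFinite _), T.card_diag]
    have hle : S.ncard ≤ n - 3 := by
      rw [← T.card_diag]; exact Set.ncard_le_ncard hSsub (Set.toFinite _)
    omega
  refine ⟨S, ⟨⟨D', hchord, hnc, hcard⟩, hSsub, hD'⟩, ?_⟩
  rw [div_le_iff₀ (by norm_num : (0:ℝ) < 3)]
  have h1 : ((n - 3 : ℕ) : ℝ) ≤ ((3 * S.ncard : ℕ) : ℝ) := Nat.cast_le.2 hcount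
  rw [Nat.cast_sub hn] at h1
  push_cast at h1
  linarith

end PT

/-- Every maximal outerplanar graph on `n` vertices has a simultaneously
flippable set of at least `(n-3)/3` internal edges. -/
theorem stmt12 {n : ℕ} (hn : 3 ≤ n) (T : PolyTri n) :
    ∃ S : Set (Sym2 (Fin n)), T.SimFlippable S ∧
      ((n : ℝ) - 3) / 3 ≤ (S.ncard : ℝ) := by
  exact PT.main_result T hn
end
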